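/- arXiv:2512.06794 — 3 statements merged into one kernel-verified Lean document; each statement's English description precedes it below -/
import Mathlib

section
/- Assume M is ergodic with unique invariant distribution π_M. Then the limit v_∞ := lim_{δ→1⁻} v_δ(π_M) exists, and for every δ ∈ [0,1) one has Σ_{ℓ∈K} π_M^ℓ · v_δ(e_ℓ) ≤ v_∞ ≤ v_δ(π_M), where e_ℓ ∈ Δ(K) is the Dirac belief on state ℓ. -/
open scoped BigOperators

noncomputable section

def IsStochastic {K : Type*} [Fintype K] (M : Matrix K K ℝ) : Prop :=
  (∀ i j, 0 ≤ M i j) ∧ ∀ i, ∑ j, M i j = 1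

def IsSplit {K : Type*} [Fintype K] (ξ : K → ℝ) (α : ℕ → ℝ) (ξs : ℕ → K → ℝ) : Prop :=
  (∀ s, 0 ≤ α s) ∧ (∀ s, ξs s ∈ stdSimplex ℝ K) ∧ (∑' s, α s) = 1 ∧
    ∀ ℓ : K, (∑' s, α s * ξs s ℓ) = ξ ℓ

def splitPayoff {K : Type*} [Fintype K] (M : Matrix K K ℝ) (u : (K → ℝ) → ℝ) (δ : ℝ)
    (w : (K → ℝ) → ℝ) (α : ℕ → ℝ) (ξs : ℕ → K → ℝ) : ℝ :=
  ∑' s, α s * ((1 - δ) * u (ξs s) + δ * w (Matrix.vecMul (ξs s) M))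

def IsValueFamily {K : Type*} [Fintype K] (M : Matrix K K ℝ) (u : (K → ℝ) → ℝ) (C : ℝ)
    (v : ℝ → (K → ℝ) → ℝ) : Prop :=
  ∀ δ ∈ Set.Ico (0 : ℝ) 1,
    (∀ ξ ∈ stdSimplex ℝ K, 0 ≤ v δ ξ ∧ v δ ξ ≤ C) ∧
    ∀ ξ ∈ stdSimplex ℝ K,
      v δ ξ = sSup { r : ℝ | ∃ α ξs, IsSplit ξ α ξs ∧ r = splitPayoff M u δ (v δ) α ξs }

namespace MPAux
set_option linter.unusedSectionVars false

open Matrix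

variable {K : Type*} [Fintype K] [Nonempty K] [DecidableEq K]

/-- Dirac belief. -/
def dir (ℓ : K) : K → ℝ := fun m => if m = ℓ then (1 : ℝ) else 0

lemma dir_mem (ℓ : K) : dir ℓ ∈ stdSimplex ℝ K := by
  constructor
  · intro m; by_cases h : m = ℓ <;> simp [dir, h]
  · simp [dir]

lemma simplex_nonneg {ξ : K → ℝ} (h : ξ ∈ stdSimplex ℝ K) (m : K) : 0 ≤ ξ m := h.1 m

lemma simplex_le_one {ξ : K → ℝ} (h : ξ ∈ stdSimplex ℝ K) (m : K) : ξ m ≤ 1 := by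
  have := h.2
  calc ξ m ≤ ∑ j, ξ j := Finset.single_le_sum (fun j _ => h.1 j) (Finset.mem_univ m)
  _ = 1 := h.2

lemma vecMul_mem {M : Matrix K K ℝ} (hM : IsStochastic M) {ξ : K → ℝ}
    (hξ : ξ ∈ stdSimplex ℝ K) : Matrix.vecMul ξ M ∈ stdSimplex ℝ K := by
  constructor
  · intro j
    simp only [Matrix.vecMul, dotProduct]
    exact Finset.sum_nonneg fun i _ => mul_nonneg (hξ.1 i) (hM.1 i j)
  · simp only [Matrix.vecMul, dotProduct]
    rw [Finset.sum_comm]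
    calc (∑ i, ∑ j, ξ i * M i j) = ∑ i, ξ i * ∑ j, M i j := by
          simp [Finset.mul_sum]
    _ = 1 := by simp only [hM.2, mul_one]; exact hξ.2

lemma IsStochastic.pow {M : Matrix K K ℝ} (hM : IsStochastic M) (n : ℕ) :
    IsStochastic (M ^ n) := by
  induction n with
  | zero =>
    constructor
    · intro i j; simp [Matrix.one_apply]; positivity
    · intro i; simp [Matrix.one_apply]
  | succ n ih =>
    rw [pow_succ]
    constructor
    · intro i j
      rw [Matrix.mul_apply]
      exact Finset.sum_nonneg fun k _ => mul_nonneg (ih.1 i k) (hM.1 k j)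
    · intro i
      simp only [Matrix.mul_apply]
      rw [Finset.sum_comm]
      calc (∑ k, ∑ j, (M ^ n) i k * M k j) = ∑ k, (M ^ n) i k * ∑ j, M k j := by
            simp [Finset.mul_sum]
      _ = 1 := by simp only [hM.2, mul_one]; exact ih.2 i

lemma vecMul_dir {M : Matrix K K ℝ} (ℓ : K) :
    Matrix.vecMul (dir ℓ) M = fun j => M ℓ j := by
  funext j
  simp only [Matrix.vecMul, dotProduct, dir]
  rw [Finset.sum_eq_single ℓ]
  · simp
  · intro b _ hb; simp [hb]
  · intro h; exact absurd (Finset.mem_univ ℓ) h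

lemma split_summable {ξ : K → ℝ} {α : ℕ → ℝ} {ξs : ℕ → K → ℝ}
    (h : IsSplit ξ α ξs) : Summable α := by
  by_contra hs
  have := h.2.2.1
  rw [tsum_eq_zero_of_not_summable hs] at this
  norm_num at this

lemma split_le_one {ξ : K → ℝ} {α : ℕ → ℝ} {ξs : ℕ → K → ℝ}
    (h : IsSplit ξ α ξs) (s : ℕ) : α s ≤ 1 := by
  have := Summable.le_tsum (split_summable h) s (fun j _ => h.1 j)
  rw [h.2.2.1] at this; exact this

lemma summable_bound {α : ℕ → ℝ} (hα : Summable α) (hα0 : ∀ s, 0 ≤ α s)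
    {f : ℕ → ℝ} {c : ℝ} (hf : ∀ s, |f s| ≤ c) :
    Summable fun s => α s * f s := by
  apply Summable.of_abs
  apply Summable.of_nonneg_of_le (fun s => abs_nonneg _) (fun s => ?_) (hα.mul_right c)
  rw [abs_mul, abs_of_nonneg (hα0 s)]
  exact mul_le_mul_of_nonneg_left (hf s) (hα0 s)

lemma split_summable_coord {ξ : K → ℝ} {α : ℕ → ℝ} {ξs : ℕ → K → ℝ}
    (h : IsSplit ξ α ξs) (m : K) : Summable fun s => α s * ξs s m :=
  summable_bound (split_summable h) h.1 (c := 1) fun s => by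
    rw [abs_of_nonneg (simplex_nonneg (h.2.1 s) m)]
    exact simplex_le_one (h.2.1 s) m

/-- pushforward of the mean through a matrix. -/
lemma split_tsum_vecMul {ξ : K → ℝ} {α : ℕ → ℝ} {ξs : ℕ → K → ℝ}
    (h : IsSplit ξ α ξs) (A : Matrix K K ℝ) (m : K) :
    ∑' s, α s * Matrix.vecMul (ξs s) A m = Matrix.vecMul ξ A m := by
  have hterm : ∀ s, α s * Matrix.vecMul (ξs s) A m = ∑ ℓ, A ℓ m * (α s * ξs s ℓ) := by
    intro s
    simp only [Matrix.vecMul, dotProduct, Finset.mul_sum]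
    exact Finset.sum_congr rfl fun ℓ _ => by ring
  calc (∑' s, α s * Matrix.vecMul (ξs s) A m)
      = ∑' s, ∑ ℓ, A ℓ m * (α s * ξs s ℓ) := tsum_congr hterm
    _ = ∑ ℓ, ∑' s, A ℓ m * (α s * ξs s ℓ) :=
        Summable.tsum_finsetSum fun ℓ _ => (split_summable_coord h ℓ).mul_left _
    _ = ∑ ℓ, A ℓ m * ξ ℓ := by
        refine Finset.sum_congr rfl fun ℓ _ => ?_
        rw [tsum_mul_left, h.2.2.2 ℓ]
    _ = Matrix.vecMul ξ A m := by
        simp only [Matrix.vecMul, dotProduct]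
        exact Finset.sum_congr rfl fun ℓ _ => by ring

lemma isSplit_trivial {ξ : K → ℝ} (hξ : ξ ∈ stdSimplex ℝ K) :
    IsSplit ξ (fun s => if s = 0 then 1 else 0) (fun _ => ξ) := by
  refine ⟨fun s => by positivity, fun _ => hξ, by rw [tsum_ite_eq], fun ℓ => ?_⟩
  have : ∀ s : ℕ, (if s = 0 then (1:ℝ) else 0) * ξ ℓ = if s = 0 then ξ ℓ else 0 := by
    intro s; split <;> simp
  rw [tsum_congr this, tsum_ite_eq]

lemma splitPayoff_trivial {M : Matrix K K ℝ} {u : (K → ℝ) → ℝ} {δ : ℝ}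
    {w : (K → ℝ) → ℝ} {ξ : K → ℝ} :
    splitPayoff M u δ w (fun s => if s = 0 then 1 else 0) (fun _ => ξ)
      = (1 - δ) * u ξ + δ * w (Matrix.vecMul ξ M) := by
  unfold splitPayoff
  have : ∀ s : ℕ, (if s = 0 then (1:ℝ) else 0) * ((1 - δ) * u ξ + δ * w (Matrix.vecMul ξ M))
      = if s = 0 then ((1 - δ) * u ξ + δ * w (Matrix.vecMul ξ M)) else 0 := by
    intro s; split <;> simp
  rw [tsum_congr this, tsum_ite_eq]


/-! ### Bellman facts -/

variable {M : Matrix K K ℝ} {u : (K → ℝ) → ℝ} {C : ℝ} {v : ℝ → (K → ℝ) → ℝ} {δ : ℝ}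

lemma abs_le_of_bounds {x a : ℝ} (h0 : 0 ≤ x) (h1 : x ≤ a) : |x| ≤ a := by
  rw [abs_of_nonneg h0]; exact h1

lemma payoff_term_abs (hM : IsStochastic M) (hδ0 : 0 ≤ δ) (hδ1 : δ ≤ 1)
    {w : (K → ℝ) → ℝ} {Bu Bw : ℝ}
    (hu0 : ∀ ζ ∈ stdSimplex ℝ K, 0 ≤ u ζ) (huB : ∀ ζ ∈ stdSimplex ℝ K, u ζ ≤ Bu)
    (hw0 : ∀ ζ ∈ stdSimplex ℝ K, 0 ≤ w ζ) (hwB : ∀ ζ ∈ stdSimplex ℝ K, w ζ ≤ Bw)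
    {ζ : K → ℝ} (hζ : ζ ∈ stdSimplex ℝ K) :
    |(1 - δ) * u ζ + δ * w (Matrix.vecMul ζ M)| ≤ (1 - δ) * Bu + δ * Bw := by
  have hζM := vecMul_mem hM hζ
  have h1 : 0 ≤ (1 - δ) * u ζ + δ * w (Matrix.vecMul ζ M) := by
    have := hu0 ζ hζ; have := hw0 _ hζM; nlinarith
  have h2 : (1 - δ) * u ζ + δ * w (Matrix.vecMul ζ M) ≤ (1 - δ) * Bu + δ * Bw := by
    have := huB ζ hζ; have := hwB _ hζM; nlinarith
  exact abs_le_of_bounds h1 h2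

lemma summable_payoff (hM : IsStochastic M) (hδ0 : 0 ≤ δ) (hδ1 : δ ≤ 1)
    {w : (K → ℝ) → ℝ} {Bu Bw : ℝ}
    (hu0 : ∀ ζ ∈ stdSimplex ℝ K, 0 ≤ u ζ) (huB : ∀ ζ ∈ stdSimplex ℝ K, u ζ ≤ Bu)
    (hw0 : ∀ ζ ∈ stdSimplex ℝ K, 0 ≤ w ζ) (hwB : ∀ ζ ∈ stdSimplex ℝ K, w ζ ≤ Bw)
    {ξ : K → ℝ} {α : ℕ → ℝ} {ξs : ℕ → K → ℝ} (hsp : IsSplit ξ α ξs) :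
    Summable fun s => α s * ((1 - δ) * u (ξs s) + δ * w (Matrix.vecMul (ξs s) M)) :=
  summable_bound (split_summable hsp) hsp.1
    (fun s => payoff_term_abs hM hδ0 hδ1 hu0 huB hw0 hwB (hsp.2.1 s))

lemma splitPayoff_le (hM : IsStochastic M) (hδ0 : 0 ≤ δ) (hδ1 : δ ≤ 1)
    {w : (K → ℝ) → ℝ} {Bu Bw : ℝ}
    (hu0 : ∀ ζ ∈ stdSimplex ℝ K, 0 ≤ u ζ) (huB : ∀ ζ ∈ stdSimplex ℝ K, u ζ ≤ Bu)
    (hw0 : ∀ ζ ∈ stdSimplex ℝ K, 0 ≤ w ζ) (hwB : ∀ ζ ∈ stdSimplex ℝ K, w ζ ≤ Bw)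
    {ξ : K → ℝ} {α : ℕ → ℝ} {ξs : ℕ → K → ℝ} (hsp : IsSplit ξ α ξs) :
    splitPayoff M u δ w α ξs ≤ (1 - δ) * Bu + δ * Bw := by
  unfold splitPayoff
  calc (∑' s, α s * ((1 - δ) * u (ξs s) + δ * w (Matrix.vecMul (ξs s) M)))
      ≤ ∑' s, α s * ((1 - δ) * Bu + δ * Bw) := by
        refine Summable.tsum_le_tsum (fun s => ?_)
          (summable_payoff hM hδ0 hδ1 hu0 huB hw0 hwB hsp)
          ((split_summable hsp).mul_right _)
        refine mul_le_mul_of_nonneg_left ?_ (hsp.1 s)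
        exact le_trans (le_abs_self _)
          (payoff_term_abs hM hδ0 hδ1 hu0 huB hw0 hwB (hsp.2.1 s))
    _ = (1 - δ) * Bu + δ * Bw := by rw [tsum_mul_right, hsp.2.2.1, one_mul]

section WithValue

variable (hM : IsStochastic M)
  (hu0 : ∀ ζ ∈ stdSimplex ℝ K, 0 ≤ u ζ) (huC : ∀ ζ ∈ stdSimplex ℝ K, u ζ ≤ C)
  (hv : IsValueFamily M u C v) (hδ : δ ∈ Set.Ico (0 : ℝ) 1)

include hM hu0 huC hv hδ

lemma bellman_bddAbove {ξ : K → ℝ} :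
    BddAbove { r : ℝ | ∃ α ξs, IsSplit ξ α ξs ∧ r = splitPayoff M u δ (v δ) α ξs } := by
  refine ⟨C, fun r hr => ?_⟩
  obtain ⟨α, ξs, hsp, rfl⟩ := hr
  have := splitPayoff_le (Bu := C) (Bw := C) hM hδ.1 (le_of_lt hδ.2) hu0 huC
    (fun ζ hζ => ((hv δ hδ).1 ζ hζ).1) (fun ζ hζ => ((hv δ hδ).1 ζ hζ).2) hsp
  linarith

lemma v_ge_payoff {ξ : K → ℝ} (hξ : ξ ∈ stdSimplex ℝ K)
    {α : ℕ → ℝ} {ξs : ℕ → K → ℝ} (hsp : IsSplit ξ α ξs) :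
    splitPayoff M u δ (v δ) α ξs ≤ v δ ξ := by
  rw [(hv δ hδ).2 ξ hξ]
  exact le_csSup (bellman_bddAbove hM hu0 huC hv hδ) ⟨α, ξs, hsp, rfl⟩

lemma v_near_split {ξ : K → ℝ} (hξ : ξ ∈ stdSimplex ℝ K) {ε : ℝ} (hε : 0 < ε) :
    ∃ α ξs, IsSplit ξ α ξs ∧ v δ ξ - ε < splitPayoff M u δ (v δ) α ξs := by
  have hne : { r : ℝ | ∃ α ξs, IsSplit ξ α ξs ∧ r = splitPayoff M u δ (v δ) α ξs }.Nonempty :=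
    ⟨_, ⟨_, _, isSplit_trivial hξ, rfl⟩⟩
  have hlt : v δ ξ - ε <
      sSup { r : ℝ | ∃ α ξs, IsSplit ξ α ξs ∧ r = splitPayoff M u δ (v δ) α ξs } := by
    rw [← (hv δ hδ).2 ξ hξ]; linarith
  obtain ⟨r, ⟨α, ξs, hsp, rfl⟩, hr⟩ := exists_lt_of_lt_csSup hne hlt
  exact ⟨α, ξs, hsp, hr⟩

/-- The Dirac identity: the only split of a Dirac is trivial. -/
lemma v_dir (ℓ : K) :
    v δ (dir ℓ) = (1 - δ) * u (dir ℓ) + δ * v δ (Matrix.vecMul (dir ℓ) M) := by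
  set c := (1 - δ) * u (dir ℓ) + δ * v δ (Matrix.vecMul (dir ℓ) M) with hc
  have hset : { r : ℝ | ∃ α ξs, IsSplit (dir ℓ) α ξs ∧ r = splitPayoff M u δ (v δ) α ξs }
      = {c} := by
    apply Set.eq_singleton_iff_unique_mem.mpr
    constructor
    · exact ⟨_, _, isSplit_trivial (dir_mem ℓ), splitPayoff_trivial.symm⟩
    · rintro r ⟨α, ξs, hsp, rfl⟩
      unfold splitPayoff
      have hterm : ∀ s, α s * ((1 - δ) * u (ξs s) + δ * v δ (Matrix.vecMul (ξs s) M))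
          = α s * c := by
        intro s
        by_cases hα : α s = 0
        · simp [hα]
        · have hξs : ξs s = dir ℓ := by
            have hcoord : ∀ m, m ≠ ℓ → ξs s m = 0 := by
              intro m hm
              have h0 : (∑' t, α t * ξs t m) = 0 := by
                rw [hsp.2.2.2 m]; simp [dir, hm]
              have hle := Summable.le_tsum (split_summable_coord hsp m) s
                (fun j _ => mul_nonneg (hsp.1 j) (simplex_nonneg (hsp.2.1 j) m))
              rw [h0] at hle
              have hge : 0 ≤ α s * ξs s m :=
                mul_nonneg (hsp.1 s) (simplex_nonneg (hsp.2.1 s) m)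
              have : α s * ξs s m = 0 := le_antisymm hle hge
              rcases mul_eq_zero.mp this with h | h
              · exact absurd h hα
              · exact h
            have hsum : ∑ m, ξs s m = 1 := (hsp.2.1 s).2
            rw [Finset.sum_eq_single ℓ (fun b _ hb => hcoord b hb)
              (fun h => absurd (Finset.mem_univ ℓ) h)] at hsum
            funext m
            by_cases hm : m = ℓ
            · rw [hm]; simp [dir, hsum]
            · simp [dir, hm, hcoord m hm]
          rw [hξs]
      rw [tsum_congr hterm, tsum_mul_right, hsp.2.2.1, one_mul]
  rw [(hv δ hδ).2 (dir ℓ) (dir_mem ℓ), hset, csSup_singleton]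

end WithValue


/-! ### Composition of splits and Jensen inequality -/

def pairE : ℕ ≃ ℕ × ℕ := (Denumerable.eqv (ℕ × ℕ)).symm

lemma compose_tsum {ξ : K → ℝ} {α : ℕ → ℝ} {ξs : ℕ → K → ℝ}
    {β : ℕ → ℕ → ℝ} {ζ : ℕ → ℕ → K → ℝ}
    (hsp : IsSplit ξ α ξs) (hβ : ∀ s, IsSplit (ξs s) (β s) (ζ s))
    {F : (K → ℝ) → ℝ} {c : ℝ}
    (hF0 : ∀ s t, 0 ≤ F (ζ s t)) (hFc : ∀ s t, F (ζ s t) ≤ c) :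
    (∑' n, (α (pairE n).1 * β (pairE n).1 (pairE n).2) * F (ζ (pairE n).1 (pairE n).2))
      = ∑' s, α s * ∑' t, β s t * F (ζ s t) := by
  have hc0 : 0 ≤ c := le_trans (hF0 0 0) (hFc 0 0)
  set f : ℕ × ℕ → ℝ := fun p => α p.1 * β p.1 p.2 * F (ζ p.1 p.2) with hf
  have hf0 : ∀ p, 0 ≤ f p := fun p =>
    mul_nonneg (mul_nonneg (hsp.1 p.1) ((hβ p.1).1 p.2)) (hF0 p.1 p.2)
  have hrow : ∀ s, Summable fun t => f (s, t) := by
    intro s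
    have h1 : Summable fun t => β s t * F (ζ s t) :=
      summable_bound (split_summable (hβ s)) (hβ s).1
        (fun t => abs_le_of_bounds (hF0 s t) (hFc s t))
    have := h1.mul_left (α s)
    simpa [hf, mul_assoc] using this
  have hrowsum : ∀ s, (∑' t, f (s, t)) = α s * ∑' t, β s t * F (ζ s t) := by
    intro s; simp only [hf, mul_assoc, tsum_mul_left]
  have hrow_le : ∀ s, (∑' t, f (s, t)) ≤ α s * c := by
    intro s
    rw [hrowsum s]
    refine mul_le_mul_of_nonneg_left ?_ (hsp.1 s)
    calc (∑' t, β s t * F (ζ s t)) ≤ ∑' t, β s t * c := by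
          refine Summable.tsum_le_tsum (fun t => mul_le_mul_of_nonneg_left (hFc s t) ((hβ s).1 t))
            (summable_bound (split_summable (hβ s)) (hβ s).1
              (fun t => abs_le_of_bounds (hF0 s t) (hFc s t)))
            ((split_summable (hβ s)).mul_right c)
      _ = c := by rw [tsum_mul_right, (hβ s).2.2.1, one_mul]
  have hsumf : Summable f := by
    refine (summable_prod_of_nonneg hf0).mpr ⟨hrow, ?_⟩
    exact Summable.of_nonneg_of_le (fun s => tsum_nonneg fun t => hf0 (s, t)) hrow_le
      ((split_summable hsp).mul_right c)
  calc (∑' n, (α (pairE n).1 * β (pairE n).1 (pairE n).2) * F (ζ (pairE n).1 (pairE n).2))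
      = ∑' p : ℕ × ℕ, f p := Equiv.tsum_eq pairE f
    _ = ∑' s, ∑' t, f (s, t) := Summable.tsum_prod' hsumf hrow
    _ = ∑' s, α s * ∑' t, β s t * F (ζ s t) := tsum_congr hrowsum

section WithValue2

variable (hM : IsStochastic M)
  (hu0 : ∀ ζ ∈ stdSimplex ℝ K, 0 ≤ u ζ) (huC : ∀ ζ ∈ stdSimplex ℝ K, u ζ ≤ C)
  (hv : IsValueFamily M u C v) (hδ : δ ∈ Set.Ico (0 : ℝ) 1)

include hM hu0 huC hv hδ

lemma v_jensen {ξ : K → ℝ} (hξ : ξ ∈ stdSimplex ℝ K)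
    {α : ℕ → ℝ} {ξs : ℕ → K → ℝ} (hsp : IsSplit ξ α ξs) :
    (∑' s, α s * v δ (ξs s)) ≤ v δ ξ := by
  have hC0 : 0 ≤ C :=
    le_trans (hu0 _ (dir_mem (Classical.arbitrary K))) (huC _ (dir_mem _))
  have hv0 : ∀ ζ ∈ stdSimplex ℝ K, 0 ≤ v δ ζ := fun ζ hζ => ((hv δ hδ).1 ζ hζ).1
  have hvC : ∀ ζ ∈ stdSimplex ℝ K, v δ ζ ≤ C := fun ζ hζ => ((hv δ hδ).1 ζ hζ).2
  refine le_of_forall_pos_le_add (fun ε hε => ?_)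
  have hchoice : ∀ s : ℕ, ∃ β ζ, IsSplit (ξs s) β ζ ∧
      v δ (ξs s) - ε * (1/2)^(s+1) < splitPayoff M u δ (v δ) β ζ := fun s =>
    v_near_split hM hu0 huC hv hδ (hsp.2.1 s) (by positivity)
  choose β ζ hβsp hβpay using hchoice
  set W : ℕ → ℝ := fun n => α (pairE n).1 * β (pairE n).1 (pairE n).2 with hW
  set Z : ℕ → K → ℝ := fun n => ζ (pairE n).1 (pairE n).2 with hZ
  -- W, Z is a split of ξ
  have hWZ : IsSplit ξ W Z := by
    refine ⟨fun n => mul_nonneg (hsp.1 _) ((hβsp _).1 _), fun n => (hβsp _).2.1 _, ?_, ?_⟩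
    · have h1 := compose_tsum hsp hβsp (F := fun _ => (1:ℝ)) (c := 1)
        (fun s t => zero_le_one) (fun s t => le_refl 1)
      simp only [mul_one] at h1
      rw [hW]
      calc (∑' n, α (pairE n).1 * β (pairE n).1 (pairE n).2) = ∑' s, α s * ∑' t, β s t := h1
        _ = ∑' s, α s * 1 := by
            refine tsum_congr fun s => ?_; rw [(hβsp s).2.2.1]
        _ = 1 := by simpa using hsp.2.2.1
    · intro m
      have h1 := compose_tsum hsp hβsp (F := fun x => x m) (c := 1)
        (fun s t => simplex_nonneg ((hβsp s).2.1 t) m)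
        (fun s t => simplex_le_one ((hβsp s).2.1 t) m)
      calc (∑' n, W n * Z n m) = ∑' s, α s * ∑' t, β s t * ζ s t m := h1
        _ = ∑' s, α s * ξs s m := by
            refine tsum_congr fun s => ?_; rw [(hβsp s).2.2.2 m]
        _ = ξ m := hsp.2.2.2 m
  -- the payoff decomposes
  have hFb : ∀ s t, 0 ≤ (1-δ) * u (ζ s t) + δ * v δ (Matrix.vecMul (ζ s t) M) := by
    intro s t
    have h1 := hu0 _ ((hβsp s).2.1 t)
    have h2 := hv0 _ (vecMul_mem hM ((hβsp s).2.1 t))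
    have := hδ.1; have := hδ.2; nlinarith
  have hFc : ∀ s t, (1-δ) * u (ζ s t) + δ * v δ (Matrix.vecMul (ζ s t) M) ≤ C := by
    intro s t
    have h1 := huC _ ((hβsp s).2.1 t)
    have h2 := hvC _ (vecMul_mem hM ((hβsp s).2.1 t))
    have := hδ.1; have := hδ.2; nlinarith
  have hpay : splitPayoff M u δ (v δ) W Z
      = ∑' s, α s * splitPayoff M u δ (v δ) (β s) (ζ s) := by
    unfold splitPayoff
    exact compose_tsum hsp hβsp (F := fun x => (1-δ) * u x + δ * v δ (Matrix.vecMul x M))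
      (c := C) hFb hFc
  have hple : splitPayoff M u δ (v δ) W Z ≤ v δ ξ := v_ge_payoff hM hu0 huC hv hδ hξ hWZ
  -- summabilities
  have hP0 : ∀ s, 0 ≤ splitPayoff M u δ (v δ) (β s) (ζ s) := by
    intro s; exact tsum_nonneg fun t => mul_nonneg ((hβsp s).1 t) (hFb s t)
  have hPC : ∀ s, splitPayoff M u δ (v δ) (β s) (ζ s) ≤ C := by
    intro s
    have := splitPayoff_le (Bu := C) (Bw := C) hM hδ.1 (le_of_lt hδ.2) hu0 huC hv0 hvC (hβsp s)
    linarith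
  have hsαP : Summable fun s => α s * splitPayoff M u δ (v δ) (β s) (ζ s) :=
    summable_bound (split_summable hsp) hsp.1
      (fun s => abs_le_of_bounds (hP0 s) (hPC s))
  have hsαv : Summable fun s => α s * v δ (ξs s) :=
    summable_bound (split_summable hsp) hsp.1
      (fun s => abs_le_of_bounds (hv0 _ (hsp.2.1 s)) (hvC _ (hsp.2.1 s)))
  have hsαε : Summable fun s => α s * (ε * (1/2)^(s+1)) := by
    apply summable_bound (split_summable hsp) hsp.1 (c := ε)
    intro s
    rw [abs_of_nonneg (by positivity)]
    calc ε * (1/2)^(s+1) ≤ ε * 1 := by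
          refine mul_le_mul_of_nonneg_left ?_ (le_of_lt hε)
          refine pow_le_one₀ (by norm_num) (by norm_num)
      _ = ε := mul_one ε
  -- put together
  have step1 : (∑' s, α s * v δ (ξs s))
      ≤ (∑' s, α s * splitPayoff M u δ (v δ) (β s) (ζ s)) + ∑' s, α s * (ε * (1/2)^(s+1)) := by
    rw [← Summable.tsum_add hsαP hsαε]
    refine Summable.tsum_le_tsum (fun s => ?_) hsαv (hsαP.add hsαε)
    have := le_of_lt (hβpay s)
    have hα := hsp.1 s
    nlinarith [mul_le_mul_of_nonneg_left (le_of_lt (hβpay s)) hα]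
  have step2 : (∑' s, α s * (ε * (1/2)^(s+1))) ≤ ε := by
    have hgeo : Summable fun s : ℕ => ε * (1/2 : ℝ)^(s+1) := by
      apply Summable.mul_left
      exact ((summable_geometric_of_lt_one (by norm_num) (by norm_num)).mul_right _ : Summable fun s : ℕ => (1/2:ℝ)^s * (1/2)).congr (fun s => by rw [← pow_succ])
    calc (∑' s, α s * (ε * (1/2)^(s+1))) ≤ ∑' s : ℕ, ε * (1/2)^(s+1) := by
          refine Summable.tsum_le_tsum (fun s => ?_) hsαε hgeo
          have h1 : 0 ≤ ε * (1/2 : ℝ)^(s+1) := by positivity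
          nlinarith [split_le_one hsp s]
      _ = ε * ∑' s : ℕ, (1/2 : ℝ)^(s+1) := tsum_mul_left
      _ = ε * 1 := by
          congr 1
          have : ∀ s : ℕ, (1/2 : ℝ)^(s+1) = (1/2)^s * (1/2) := fun s => by rw [pow_succ]
          rw [tsum_congr this, tsum_mul_right, tsum_geometric_of_lt_one (by norm_num) (by norm_num)]
          norm_num
      _ = ε := mul_one ε
  calc (∑' s, α s * v δ (ξs s))
      ≤ (∑' s, α s * splitPayoff M u δ (v δ) (β s) (ζ s)) + ∑' s, α s * (ε * (1/2)^(s+1)) := step1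
    _ ≤ splitPayoff M u δ (v δ) W Z + ε := by rw [hpay]; linarith [step2]
    _ ≤ v δ ξ + ε := by linarith

end WithValue2


/-! ### Sub/supersolution comparison -/

section Comparison

variable (hM : IsStochastic M)
  (hu0 : ∀ ζ ∈ stdSimplex ℝ K, 0 ≤ u ζ) (huC : ∀ ζ ∈ stdSimplex ℝ K, u ζ ≤ C)
  (hv : IsValueFamily M u C v) (hδ : δ ∈ Set.Ico (0 : ℝ) 1)

include hM hu0 huC hv hδ

lemma v_le_of_supersolution {w : (K → ℝ) → ℝ} {B : ℝ}
    (hw0 : ∀ ζ ∈ stdSimplex ℝ K, 0 ≤ w ζ) (hwB : ∀ ζ ∈ stdSimplex ℝ K, w ζ ≤ B)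
    (hsup : ∀ ξ ∈ stdSimplex ℝ K, ∀ α ξs, IsSplit ξ α ξs →
      splitPayoff M u δ w α ξs ≤ w ξ) :
    ∀ ξ ∈ stdSimplex ℝ K, v δ ξ ≤ w ξ := by
  have hv0 : ∀ ζ ∈ stdSimplex ℝ K, 0 ≤ v δ ζ := fun ζ hζ => ((hv δ hδ).1 ζ hζ).1
  have hvC : ∀ ζ ∈ stdSimplex ℝ K, v δ ζ ≤ C := fun ζ hζ => ((hv δ hδ).1 ζ hζ).2
  have hB0 : 0 ≤ B := le_trans (hw0 _ (dir_mem (Classical.arbitrary K))) (hwB _ (dir_mem _))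
  have hC0 : 0 ≤ C :=
    le_trans (hu0 _ (dir_mem (Classical.arbitrary K))) (huC _ (dir_mem _))
  set E := (fun ξ => v δ ξ - w ξ) '' (stdSimplex ℝ K) with hE
  have hEne : E.Nonempty := (Set.Nonempty.image _ ⟨dir (Classical.arbitrary K), dir_mem _⟩)
  have hEbdd : BddAbove E := by
    refine ⟨C, ?_⟩
    rintro x ⟨ζ, hζ, rfl⟩
    have := hvC ζ hζ; have := hw0 ζ hζ; simp only; linarith
  set e := sSup E with he
  have he_ge : ∀ ζ ∈ stdSimplex ℝ K, v δ ζ - w ζ ≤ e :=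
    fun ζ hζ => le_csSup hEbdd ⟨ζ, hζ, rfl⟩
  have heC : e ≤ C := csSup_le hEne (by
    rintro x ⟨ζ, hζ, rfl⟩
    have := hvC ζ hζ; have := hw0 ζ hζ; simp only; linarith)
  have he_lb : -(B + C) ≤ e := by
    refine le_csSup_of_le hEbdd ⟨dir (Classical.arbitrary K), dir_mem _, rfl⟩ ?_
    have := hv0 _ (dir_mem (Classical.arbitrary K))
    have := hwB _ (dir_mem (Classical.arbitrary K))
    simp only; linarith
  have key : ∀ ξ ∈ stdSimplex ℝ K, v δ ξ - w ξ ≤ δ * e := by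
    intro ξ hξ
    have hvle : v δ ξ ≤ w ξ + δ * e := by
      rw [(hv δ hδ).2 ξ hξ]
      refine csSup_le ⟨_, ⟨_, _, isSplit_trivial hξ, rfl⟩⟩ ?_
      rintro r ⟨α, ξs, hsp, rfl⟩
      have hterm : ∀ s,
          α s * ((1-δ) * u (ξs s) + δ * v δ (Matrix.vecMul (ξs s) M))
            ≤ α s * ((1-δ) * u (ξs s) + δ * w (Matrix.vecMul (ξs s) M)) + α s * (δ * e) := by
        intro s
        have h1 : v δ (Matrix.vecMul (ξs s) M) ≤ w (Matrix.vecMul (ξs s) M) + e := by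
          have := he_ge _ (vecMul_mem hM (hsp.2.1 s)); linarith
        have hα := hsp.1 s
        have hδ0 := hδ.1
        have hfac : α s * ((1-δ) * u (ξs s) + δ * v δ (Matrix.vecMul (ξs s) M))
            - (α s * ((1-δ) * u (ξs s) + δ * w (Matrix.vecMul (ξs s) M)) + α s * (δ * e))
            = (α s * δ) * (v δ (Matrix.vecMul (ξs s) M)
              - (w (Matrix.vecMul (ξs s) M) + e)) := by ring
        have hnp : (α s * δ) * (v δ (Matrix.vecMul (ξs s) M)
            - (w (Matrix.vecMul (ξs s) M) + e)) ≤ 0 :=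
          mul_nonpos_of_nonneg_of_nonpos (mul_nonneg hα hδ0) (by linarith)
        linarith
      have hs1 : Summable fun s =>
          α s * ((1-δ) * u (ξs s) + δ * v δ (Matrix.vecMul (ξs s) M)) :=
        summable_payoff hM hδ.1 (le_of_lt hδ.2) hu0 huC hv0 hvC hsp
      have hs2 : Summable fun s =>
          α s * ((1-δ) * u (ξs s) + δ * w (Matrix.vecMul (ξs s) M)) :=
        summable_payoff hM hδ.1 (le_of_lt hδ.2) hu0 huC hw0 hwB hsp
      have hs3 : Summable fun s => α s * (δ * e) := (split_summable hsp).mul_right _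
      calc splitPayoff M u δ (v δ) α ξs
          ≤ ∑' s, (α s * ((1-δ) * u (ξs s) + δ * w (Matrix.vecMul (ξs s) M))
              + α s * (δ * e)) := by
            unfold splitPayoff
            exact Summable.tsum_le_tsum hterm hs1 (hs2.add hs3)
        _ = splitPayoff M u δ w α ξs + ∑' s, α s * (δ * e) := by
            rw [Summable.tsum_add hs2 hs3]; rfl
        _ = splitPayoff M u δ w α ξs + δ * e := by
            rw [tsum_mul_right, hsp.2.2.1, one_mul]
        _ ≤ w ξ + δ * e := by have := hsup ξ hξ α ξs hsp; linarith
    linarith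
  have hee : e ≤ δ * e := csSup_le hEne (by rintro x ⟨ζ, hζ, rfl⟩; exact key ζ hζ)
  have he0 : e ≤ 0 := by nlinarith [hδ.1, hδ.2]
  intro ξ hξ
  have := he_ge ξ hξ; linarith

lemma le_v_of_subsolution {w : (K → ℝ) → ℝ} {B : ℝ}
    (hwB : ∀ ζ ∈ stdSimplex ℝ K, |w ζ| ≤ B)
    (hsub : ∀ ξ ∈ stdSimplex ℝ K, ∃ α ξs, IsSplit ξ α ξs ∧
      w ξ ≤ splitPayoff M u δ w α ξs) :
    ∀ ξ ∈ stdSimplex ℝ K, w ξ ≤ v δ ξ := by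
  have hv0 : ∀ ζ ∈ stdSimplex ℝ K, 0 ≤ v δ ζ := fun ζ hζ => ((hv δ hδ).1 ζ hζ).1
  have hvC : ∀ ζ ∈ stdSimplex ℝ K, v δ ζ ≤ C := fun ζ hζ => ((hv δ hδ).1 ζ hζ).2
  have hC0 : 0 ≤ C :=
    le_trans (hu0 _ (dir_mem (Classical.arbitrary K))) (huC _ (dir_mem _))
  have hB0 : 0 ≤ B := le_trans (abs_nonneg _) (hwB _ (dir_mem (Classical.arbitrary K)))
  set E := (fun ξ => w ξ - v δ ξ) '' (stdSimplex ℝ K) with hE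
  have hEne : E.Nonempty := (Set.Nonempty.image _ ⟨dir (Classical.arbitrary K), dir_mem _⟩)
  have hEbdd : BddAbove E := by
    refine ⟨B, ?_⟩
    rintro x ⟨ζ, hζ, rfl⟩
    have h1 := le_trans (le_abs_self _) (hwB ζ hζ)
    have := hv0 ζ hζ; simp only; linarith
  set e := sSup E with he
  have he_ge : ∀ ζ ∈ stdSimplex ℝ K, w ζ - v δ ζ ≤ e :=
    fun ζ hζ => le_csSup hEbdd ⟨ζ, hζ, rfl⟩
  have heB : e ≤ B := csSup_le hEne (by
    rintro x ⟨ζ, hζ, rfl⟩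
    have h1 := le_trans (le_abs_self _) (hwB ζ hζ)
    have := hv0 ζ hζ; simp only; linarith)
  have he_lb : -(B + C) ≤ e := by
    refine le_csSup_of_le hEbdd ⟨dir (Classical.arbitrary K), dir_mem _, rfl⟩ ?_
    have h1 := le_trans (neg_abs_le _) (neg_le_neg (hwB _ (dir_mem (Classical.arbitrary K))) : _)
    have h2 := hvC _ (dir_mem (Classical.arbitrary K))
    have h3 := neg_abs_le (w (dir (Classical.arbitrary K)))
    have h4 := hwB _ (dir_mem (Classical.arbitrary K))
    simp only; linarith
  have key : ∀ ξ ∈ stdSimplex ℝ K, w ξ - v δ ξ ≤ δ * e := by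
    intro ξ hξ
    obtain ⟨α, ξs, hsp, hwle⟩ := hsub ξ hξ
    have hterm : ∀ s,
        α s * ((1-δ) * u (ξs s) + δ * w (Matrix.vecMul (ξs s) M))
          ≤ α s * ((1-δ) * u (ξs s) + δ * v δ (Matrix.vecMul (ξs s) M)) + α s * (δ * e) := by
      intro s
      have h1 : w (Matrix.vecMul (ξs s) M) ≤ v δ (Matrix.vecMul (ξs s) M) + e := by
        have := he_ge _ (vecMul_mem hM (hsp.2.1 s)); linarith
      have hα := hsp.1 s
      have hδ0 := hδ.1
      have hfac : α s * ((1-δ) * u (ξs s) + δ * w (Matrix.vecMul (ξs s) M))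
          - (α s * ((1-δ) * u (ξs s) + δ * v δ (Matrix.vecMul (ξs s) M)) + α s * (δ * e))
          = (α s * δ) * (w (Matrix.vecMul (ξs s) M)
            - (v δ (Matrix.vecMul (ξs s) M) + e)) := by ring
      have hnp : (α s * δ) * (w (Matrix.vecMul (ξs s) M)
          - (v δ (Matrix.vecMul (ξs s) M) + e)) ≤ 0 :=
        mul_nonpos_of_nonneg_of_nonpos (mul_nonneg hα hδ0) (by linarith)
      linarith
    have hs1 : Summable fun s =>
        α s * ((1-δ) * u (ξs s) + δ * w (Matrix.vecMul (ξs s) M)) := by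
      refine summable_bound (split_summable hsp) hsp.1 (c := (1-δ) * C + δ * B) fun s => ?_
      have h1 : |(1-δ) * u (ξs s)| ≤ (1-δ) * C := by
        rw [abs_of_nonneg (mul_nonneg (by linarith [hδ.2]) (hu0 _ (hsp.2.1 s)))]
        have := huC _ (hsp.2.1 s); nlinarith [hδ.2]
      have h2 : |δ * w (Matrix.vecMul (ξs s) M)| ≤ δ * B := by
        rw [abs_mul, abs_of_nonneg hδ.1]
        exact mul_le_mul_of_nonneg_left (hwB _ (vecMul_mem hM (hsp.2.1 s))) hδ.1
      calc |(1-δ) * u (ξs s) + δ * w (Matrix.vecMul (ξs s) M)|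
          ≤ |(1-δ) * u (ξs s)| + |δ * w (Matrix.vecMul (ξs s) M)| := abs_add_le _ _
        _ ≤ (1-δ) * C + δ * B := add_le_add h1 h2
    have hs2 : Summable fun s =>
        α s * ((1-δ) * u (ξs s) + δ * v δ (Matrix.vecMul (ξs s) M)) :=
      summable_payoff hM hδ.1 (le_of_lt hδ.2) hu0 huC hv0 hvC hsp
    have hs3 : Summable fun s => α s * (δ * e) := (split_summable hsp).mul_right _
    have hcomp : splitPayoff M u δ w α ξs ≤ splitPayoff M u δ (v δ) α ξs + δ * e := by
      calc splitPayoff M u δ w α ξs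
          ≤ ∑' s, (α s * ((1-δ) * u (ξs s) + δ * v δ (Matrix.vecMul (ξs s) M))
              + α s * (δ * e)) := by
            unfold splitPayoff
            exact Summable.tsum_le_tsum hterm hs1 (hs2.add hs3)
        _ = splitPayoff M u δ (v δ) α ξs + ∑' s, α s * (δ * e) := by
            rw [Summable.tsum_add hs2 hs3]; rfl
        _ = splitPayoff M u δ (v δ) α ξs + δ * e := by
            rw [tsum_mul_right, hsp.2.2.1, one_mul]
    have hvp := v_ge_payoff hM hu0 huC hv hδ hξ hsp
    linarith
  have hee : e ≤ δ * e := csSup_le hEne (by rintro x ⟨ζ, hζ, rfl⟩; exact key ζ hζ)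
  have he0 : e ≤ 0 := by nlinarith [hδ.1, hδ.2]
  intro ξ hξ
  have := he_ge ξ hξ; linarith

end Comparison


/-! ### Mixed splits (part countable split, part Dirac revelation) -/

def mixW (p : ℝ) (α : ℕ → ℝ) (β : K → ℝ) : ℕ → ℝ := fun n =>
  if n % 2 = 0 then p * α (n / 2)
  else if h : n / 2 < Fintype.card K then β ((Fintype.equivFin K).symm ⟨n / 2, h⟩) else 0

def mixB (ξs : ℕ → K → ℝ) : ℕ → K → ℝ := fun n =>
  if n % 2 = 0 then ξs (n / 2)
  else if h : n / 2 < Fintype.card K then dir ((Fintype.equivFin K).symm ⟨n / 2, h⟩)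
  else dir (Classical.arbitrary K)

lemma mixW_even (p : ℝ) (α : ℕ → ℝ) (β : K → ℝ) (s : ℕ) :
    mixW p α β (2*s) = p * α s := by
  have e1 : (2*s) % 2 = 0 := by omega
  have e2 : (2*s) / 2 = s := by omega
  unfold mixW; rw [if_pos e1, e2]

lemma mixB_even (ξs : ℕ → K → ℝ) (s : ℕ) : mixB ξs (2*s) = ξs s := by
  have e1 : (2*s) % 2 = 0 := by omega
  have e2 : (2*s) / 2 = s := by omega
  unfold mixB; rw [if_pos e1, e2]

lemma mixW_odd (p : ℝ) (α : ℕ → ℝ) (β : K → ℝ) (s : ℕ) :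
    mixW p α β (2*s+1) = if h : s < Fintype.card K
      then β ((Fintype.equivFin K).symm ⟨s, h⟩) else 0 := by
  have e1 : ¬ ((2*s+1) % 2 = 0) := by omega
  have e2 : (2*s+1) / 2 = s := by omega
  unfold mixW; rw [if_neg e1, e2]

lemma mixB_odd (ξs : ℕ → K → ℝ) (s : ℕ) :
    mixB ξs (2*s+1) = if h : s < Fintype.card K
      then dir ((Fintype.equivFin K).symm ⟨s, h⟩) else dir (Classical.arbitrary K) := by
  have e1 : ¬ ((2*s+1) % 2 = 0) := by omega
  have e2 : (2*s+1) / 2 = s := by omega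
  unfold mixB; rw [if_neg e1, e2]

set_option maxHeartbeats 1000000 in
lemma mix_tsum (p : ℝ) (α : ℕ → ℝ) (ξs : ℕ → K → ℝ) (β : K → ℝ)
    (G : (K → ℝ) → ℝ) (hs : Summable fun s => p * α s * G (ξs s)) :
    (∑' n, mixW p α β n * G (mixB ξs n))
      = p * (∑' s, α s * G (ξs s)) + ∑ ℓ, β ℓ * G (dir ℓ) := by
  have heven : ∀ s : ℕ, mixW p α β (2*s) * G (mixB ξs (2*s)) = p * α s * G (ξs s) := by
    intro s; rw [mixW_even, mixB_even]
  have hodd : ∀ s : ℕ, mixW p α β (2*s+1) * G (mixB ξs (2*s+1)) =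
      (if h : s < Fintype.card K
        then β ((Fintype.equivFin K).symm ⟨s, h⟩) * G (dir ((Fintype.equivFin K).symm ⟨s, h⟩))
        else 0) := by
    intro s
    rw [mixW_odd, mixB_odd]
    by_cases h : s < Fintype.card K
    · rw [dif_pos h, dif_pos h, dif_pos h]
    · rw [dif_neg h, dif_neg h, dif_neg h, zero_mul]
  have hsodd : Summable fun s : ℕ => mixW p α β (2*s+1) * G (mixB ξs (2*s+1)) := by
    apply summable_of_ne_finset_zero (s := Finset.range (Fintype.card K))
    intro b hb
    rw [Finset.mem_range] at hb
    rw [hodd b, dif_neg hb]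
  have hseven : Summable fun s : ℕ => mixW p α β (2*s) * G (mixB ξs (2*s)) :=
    hs.congr fun s => (heven s).symm
  rw [← tsum_even_add_odd hseven hsodd]
  congr 1
  · rw [tsum_congr heven]
    have h3 : ∀ s, p * α s * G (ξs s) = p * (α s * G (ξs s)) := fun s => by ring
    rw [tsum_congr h3, tsum_mul_left]
  · rw [tsum_congr hodd]
    rw [tsum_eq_sum (s := Finset.range (Fintype.card K)) (fun b hb => by
      rw [Finset.mem_range] at hb; exact dif_neg hb)]
    have hfin : (∑ s ∈ Finset.range (Fintype.card K),
        (if h : s < Fintype.card K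
          then β ((Fintype.equivFin K).symm ⟨s, h⟩) * G (dir ((Fintype.equivFin K).symm ⟨s, h⟩))
          else 0))
        = ∑ i : Fin (Fintype.card K),
            β ((Fintype.equivFin K).symm i) * G (dir ((Fintype.equivFin K).symm i)) := by
      rw [← Fin.sum_univ_eq_sum_range
        (fun s => if h : s < Fintype.card K
          then β ((Fintype.equivFin K).symm ⟨s, h⟩) * G (dir ((Fintype.equivFin K).symm ⟨s, h⟩))
          else 0) (Fintype.card K)]
      refine Finset.sum_congr rfl fun i _ => ?_
      rw [dif_pos i.is_lt]
    rw [hfin]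
    exact Equiv.sum_comp (Fintype.equivFin K).symm (fun ℓ => β ℓ * G (dir ℓ))

lemma mix_isSplit {p : ℝ} (hp0 : 0 ≤ p) (hp1 : p ≤ 1)
    {ξ : K → ℝ} (hξ : ξ ∈ stdSimplex ℝ K)
    {α : ℕ → ℝ} {ξs : ℕ → K → ℝ} (hsp : IsSplit ξ α ξs) :
    IsSplit ξ (mixW p α (fun ℓ => (1-p) * ξ ℓ)) (mixB ξs) := by
  refine ⟨?_, ?_, ?_, ?_⟩
  · intro n
    unfold mixW
    split_ifs with h1 h2
    · exact mul_nonneg hp0 (hsp.1 _)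
    · exact mul_nonneg (by linarith) (hξ.1 _)
    · exact le_refl 0
  · intro n
    unfold mixB
    split_ifs
    · exact hsp.2.1 _
    · exact dir_mem _
    · exact dir_mem _
  · have h1 := mix_tsum p α ξs (fun ℓ => (1-p) * ξ ℓ) (fun _ => (1:ℝ))
      (by simpa using (split_summable hsp).mul_left p)
    simp only [mul_one] at h1
    rw [h1, hsp.2.2.1]
    calc p * 1 + ∑ ℓ, (1-p) * ξ ℓ = p + (1-p) * ∑ ℓ, ξ ℓ := by rw [← Finset.mul_sum]; ring
      _ = 1 := by rw [hξ.2]; ring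
  · intro m
    have hsm : Summable fun s => p * (α s * ξs s m) := (split_summable_coord hsp m).mul_left p
    have h1 := mix_tsum p α ξs (fun ℓ => (1-p) * ξ ℓ) (fun x => x m)
      (hsm.congr fun s => by ring)
    rw [h1, hsp.2.2.2 m]
    have h2 : (∑ ℓ, (1-p) * ξ ℓ * dir ℓ m) = (1-p) * ξ m := by
      have h3 : ∀ ℓ, (1-p) * ξ ℓ * dir ℓ m = if m = ℓ then (1-p) * ξ ℓ else 0 := by
        intro ℓ; simp only [dir]; split <;> simp
      rw [Finset.sum_congr rfl fun ℓ _ => h3 ℓ, Finset.sum_ite_eq Finset.univ m]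
      simp
    rw [h2]; ring

lemma split_pushforward {A : Matrix K K ℝ} (hA : IsStochastic A)
    {ξ : K → ℝ} {α : ℕ → ℝ} {ξs : ℕ → K → ℝ} (hsp : IsSplit ξ α ξs) :
    IsSplit (Matrix.vecMul ξ A) α (fun s => Matrix.vecMul (ξs s) A) :=
  ⟨hsp.1, fun s => vecMul_mem hA (hsp.2.1 s), hsp.2.2.1,
    fun m => split_tsum_vecMul hsp A m⟩

lemma vecMul_pow_inv {πM : K → ℝ} (hπinv : Matrix.vecMul πM M = πM) (n : ℕ) :
    Matrix.vecMul πM (M ^ n) = πM := by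
  induction n with
  | zero => simp [Matrix.vecMul_one]
  | succ n ih => rw [pow_succ, ← Matrix.vecMul_vecMul, ih, hπinv]

section WithValue3

variable (hM : IsStochastic M)
  (hu0 : ∀ ζ ∈ stdSimplex ℝ K, 0 ≤ u ζ) (huC : ∀ ζ ∈ stdSimplex ℝ K, u ζ ≤ C)
  (hv : IsValueFamily M u C v) (hδ : δ ∈ Set.Ico (0 : ℝ) 1)

include hM hu0 huC hv hδ

/-- Splitting into Diracs: `∑ ℓ ξ ℓ v δ (e ℓ) ≤ v δ ξ`. -/
lemma dirac_split_le {ξ : K → ℝ} (hξ : ξ ∈ stdSimplex ℝ K) :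
    (∑ ℓ, ξ ℓ * v δ (dir ℓ)) ≤ v δ ξ := by
  have hsp0 := isSplit_trivial hξ
  have hmix := mix_isSplit (p := 0) le_rfl zero_le_one hξ hsp0
  have hpay : splitPayoff M u δ (v δ)
      (mixW 0 (fun s => if s = 0 then 1 else 0) (fun ℓ => (1-0) * ξ ℓ))
      (mixB (fun _ => ξ))
      = ∑ ℓ, ξ ℓ * ((1-δ) * u (dir ℓ) + δ * v δ (Matrix.vecMul (dir ℓ) M)) := by
    unfold splitPayoff
    have h1 := mix_tsum 0 (fun s => if s = 0 then (1:ℝ) else 0) (fun _ => ξ)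
      (fun ℓ => (1-0) * ξ ℓ)
      (fun x => (1-δ) * u x + δ * v δ (Matrix.vecMul x M)) (by simpa using summable_zero)
    rw [h1]
    simp
  have hle := v_ge_payoff hM hu0 huC hv hδ hξ hmix
  rw [hpay] at hle
  refine le_trans (le_of_eq (Finset.sum_congr rfl fun ℓ _ => ?_)) hle
  rw [← v_dir hM hu0 huC hv hδ ℓ]

end WithValue3


/-! ### Antitonicity of δ ↦ v δ πM -/

section Antitone

variable (hM : IsStochastic M)
  (hu0 : ∀ ζ ∈ stdSimplex ℝ K, 0 ≤ u ζ) (huC : ∀ ζ ∈ stdSimplex ℝ K, u ζ ≤ C)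
  (hv : IsValueFamily M u C v)

include hM hu0 huC hv

lemma psi_antitone {δ δ' : ℝ} (hδ : δ ∈ Set.Ico (0:ℝ) 1) (hδ' : δ' ∈ Set.Ico (0:ℝ) 1)
    (hle : δ ≤ δ') {πM : K → ℝ} (hπ : πM ∈ stdSimplex ℝ K)
    (hπinv : Matrix.vecMul πM M = πM) :
    v δ' πM ≤ v δ πM := by
  have h1δ : (0:ℝ) < 1 - δ := by linarith [hδ.2]
  have h1δ' : (0:ℝ) < 1 - δ' := by linarith [hδ'.2]
  have hδ0 := hδ.1
  have hδ'0 := hδ'.1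
  have hC0 : 0 ≤ C :=
    le_trans (hu0 _ (dir_mem (Classical.arbitrary K))) (huC _ (dir_mem _))
  have hv0 : ∀ ζ ∈ stdSimplex ℝ K, 0 ≤ v δ ζ := fun ζ hζ => ((hv δ hδ).1 ζ hζ).1
  have hvC : ∀ ζ ∈ stdSimplex ℝ K, v δ ζ ≤ C := fun ζ hζ => ((hv δ hδ).1 ζ hζ).2
  set a : ℝ := (1-δ')/(1-δ) with hadef
  have ha0 : 0 ≤ a := by positivity
  have ha1 : a * (1-δ) = 1-δ' := div_mul_cancel₀ _ (ne_of_gt h1δ)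
  set b : ℕ → ℝ := fun j => a * (δ'-δ) * δ'^j with hbdef
  have hb0 : ∀ j, 0 ≤ b j := fun j =>
    mul_nonneg (mul_nonneg ha0 (by linarith)) (pow_nonneg hδ'0 j)
  have hb00 : b 0 = a * (δ'-δ) := by simp [hbdef]
  have hbsucc : ∀ j, δ' * b j = b (j+1) := by
    intro j; simp only [hbdef]; rw [pow_succ]; ring
  have hgeo : Summable fun j : ℕ => δ'^j := summable_geometric_of_lt_one hδ'0 hδ'.2
  have hbsum : Summable b := by
    have := hgeo.mul_left (a * (δ'-δ)); simpa [hbdef] using this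
  -- absolute value bounds for v on pushforwards
  have hvabs : ∀ (A : Matrix K K ℝ), IsStochastic A → ∀ ζ ∈ stdSimplex ℝ K,
      |v δ (Matrix.vecMul ζ A)| ≤ C := by
    intro A hA ζ hζ
    exact abs_le_of_bounds (hv0 _ (vecMul_mem hA hζ)) (hvC _ (vecMul_mem hA hζ))
  -- the stationary supersolution
  set w : (K → ℝ) → ℝ :=
    fun ζ => a * v δ ζ + ∑' j : ℕ, b j * v δ (Matrix.vecMul ζ (M^(j+1))) with hwdef
  have hwval : ∀ ζ, w ζ = a * v δ ζ + ∑' j : ℕ, b j * v δ (Matrix.vecMul ζ (M^(j+1))) :=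
    fun ζ => rfl
  have hsF : ∀ ζ ∈ stdSimplex ℝ K,
      Summable fun j : ℕ => b j * v δ (Matrix.vecMul ζ (M^(j+1))) := by
    intro ζ hζ
    exact summable_bound hbsum hb0 (fun j => hvabs _ (IsStochastic.pow hM (j+1)) ζ hζ)
  have hw0 : ∀ ζ ∈ stdSimplex ℝ K, 0 ≤ w ζ := by
    intro ζ hζ
    rw [hwval]
    have h1 : 0 ≤ ∑' j : ℕ, b j * v δ (Matrix.vecMul ζ (M^(j+1))) :=
      tsum_nonneg fun j => mul_nonneg (hb0 j)
        (hv0 _ (vecMul_mem (IsStochastic.pow hM (j+1)) hζ))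
    have h2 : 0 ≤ a * v δ ζ := mul_nonneg ha0 (hv0 ζ hζ)
    linarith
  have hwB : ∀ ζ ∈ stdSimplex ℝ K, w ζ ≤ a * C + (∑' j, b j) * C := by
    intro ζ hζ
    rw [hwval]
    have h1 : (∑' j : ℕ, b j * v δ (Matrix.vecMul ζ (M^(j+1)))) ≤ ∑' j : ℕ, b j * C := by
      refine Summable.tsum_le_tsum (fun j => ?_) (hsF ζ hζ) (hbsum.mul_right C)
      exact mul_le_mul_of_nonneg_left
        (hvC _ (vecMul_mem (IsStochastic.pow hM (j+1)) hζ)) (hb0 j)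
    have h2 : a * v δ ζ ≤ a * C := mul_le_mul_of_nonneg_left (hvC ζ hζ) ha0
    rw [tsum_mul_right] at h1
    linarith
  -- supersolution property for the δ'-Bellman operator
  have hsup : ∀ ξ ∈ stdSimplex ℝ K, ∀ α ξs, IsSplit ξ α ξs →
      splitPayoff M u δ' w α ξs ≤ w ξ := by
    intro ξ hξ α ξs hsp
    have hvm : ∀ (x : K → ℝ) (j : ℕ),
        Matrix.vecMul (Matrix.vecMul x M) (M^(j+1)) = Matrix.vecMul x (M^(j+2)) := by
      intro x j
      rw [Matrix.vecMul_vecMul, ← pow_succ']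
    -- inner tails
    set T : ℕ → ℝ := fun s => ∑' j : ℕ, b j * v δ (Matrix.vecMul (ξs s) (M^(j+2))) with hTdef
    have hTs : ∀ s, Summable fun j : ℕ => b j * v δ (Matrix.vecMul (ξs s) (M^(j+2))) :=
      fun s => summable_bound hbsum hb0
        (fun j => hvabs _ (IsStochastic.pow hM (j+2)) _ (hsp.2.1 s))
    have hT0 : ∀ s, 0 ≤ T s := fun s =>
      tsum_nonneg fun j => mul_nonneg (hb0 j)
        (hv0 _ (vecMul_mem (IsStochastic.pow hM (j+2)) (hsp.2.1 s)))
    have hTC : ∀ s, T s ≤ (∑' j, b j) * C := by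
      intro s
      rw [hTdef]
      have h1 : (∑' j : ℕ, b j * v δ (Matrix.vecMul (ξs s) (M^(j+2)))) ≤ ∑' j : ℕ, b j * C := by
        refine Summable.tsum_le_tsum (fun j => ?_) (hTs s) (hbsum.mul_right C)
        exact mul_le_mul_of_nonneg_left
          (hvC _ (vecMul_mem (IsStochastic.pow hM (j+2)) (hsp.2.1 s))) (hb0 j)
      rw [tsum_mul_right] at h1
      exact h1
    have hws : ∀ s, w (Matrix.vecMul (ξs s) M) = a * v δ (Matrix.vecMul (ξs s) M) + T s := by
      intro s
      rw [hwval, hTdef]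
      congr 1
      exact tsum_congr fun j => by rw [hvm]
    -- decompose the payoff termwise
    set A1 : ℕ → ℝ := fun s =>
      a * (α s * ((1-δ) * u (ξs s) + δ * v δ (Matrix.vecMul (ξs s) M)))
        + b 0 * (α s * v δ (Matrix.vecMul (ξs s) M)) with hA1def
    set B1 : ℕ → ℝ := fun s => δ' * (α s * T s) with hB1def
    have hterm : ∀ s, α s * ((1-δ') * u (ξs s) + δ' * w (Matrix.vecMul (ξs s) M))
        = A1 s + B1 s := by
      intro s
      rw [hws s, hA1def, hB1def]
      simp only
      rw [← ha1, hb00]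
      ring
    -- summabilities
    have hsv1 : Summable fun s => α s * v δ (Matrix.vecMul (ξs s) M) :=
      summable_bound (split_summable hsp) hsp.1
        (fun s => hvabs _ (by simpa using IsStochastic.pow hM 1) _ (hsp.2.1 s))
    have hspay : Summable fun s =>
        α s * ((1-δ) * u (ξs s) + δ * v δ (Matrix.vecMul (ξs s) M)) :=
      summable_payoff hM hδ.1 (le_of_lt hδ.2) hu0 huC hv0 hvC hsp
    have hsA1 : Summable A1 := (hspay.mul_left a).add (hsv1.mul_left (b 0))
    have hsT : Summable fun s => α s * T s :=
      summable_bound (split_summable hsp) hsp.1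
        (fun s => abs_le_of_bounds (hT0 s) (hTC s))
    have hsB1 : Summable B1 := hsT.mul_left δ'
    have hpay : splitPayoff M u δ' w α ξs = (∑' s, A1 s) + ∑' s, B1 s := by
      unfold splitPayoff
      rw [tsum_congr hterm, Summable.tsum_add hsA1 hsB1]
    -- bound the A-part
    have hA1sum : (∑' s, A1 s) = a * splitPayoff M u δ (v δ) α ξs
        + b 0 * ∑' s, α s * v δ (Matrix.vecMul (ξs s) M) := by
      rw [hA1def, Summable.tsum_add (hspay.mul_left a) (hsv1.mul_left (b 0)),
        tsum_mul_left, tsum_mul_left]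
      rfl
    have hJ0 : (∑' s, α s * v δ (Matrix.vecMul (ξs s) M)) ≤ v δ (Matrix.vecMul ξ M) :=
      v_jensen hM hu0 huC hv hδ (vecMul_mem hM hξ) (split_pushforward hM hsp)
    have hApart : (∑' s, A1 s) ≤ a * v δ ξ + b 0 * v δ (Matrix.vecMul ξ M) := by
      rw [hA1sum]
      have h1 := mul_le_mul_of_nonneg_left (v_ge_payoff hM hu0 huC hv hδ hξ hsp) ha0
      have h2 := mul_le_mul_of_nonneg_left hJ0 (hb0 0)
      linarith
    -- bound the B-part: swap sums, Jensen in each coordinate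
    set f : ℕ → ℕ → ℝ := fun s j =>
      α s * (b j * v δ (Matrix.vecMul (ξs s) (M^(j+2)))) with hfdef
    have hf0 : ∀ p : ℕ × ℕ, 0 ≤ f p.1 p.2 := fun p =>
      mul_nonneg (hsp.1 p.1) (mul_nonneg (hb0 p.2)
        (hv0 _ (vecMul_mem (IsStochastic.pow hM (p.2+2)) (hsp.2.1 p.1))))
    have hfrow : ∀ s, Summable (f s) := fun s => (hTs s).mul_left (α s)
    have hfrowsum : ∀ s, (∑' j, f s j) = α s * T s := by
      intro s; rw [hfdef, hTdef]; exact tsum_mul_left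
    have hfcol : ∀ j, Summable fun s => f s j := by
      intro j
      have h1 : Summable fun s => α s * v δ (Matrix.vecMul (ξs s) (M^(j+2))) :=
        summable_bound (split_summable hsp) hsp.1
          (fun s => hvabs _ (IsStochastic.pow hM (j+2)) _ (hsp.2.1 s))
      refine (h1.mul_left (b j)).congr fun s => ?_
      rw [hfdef]; ring
    have hfunc : Summable (Function.uncurry f) := by
      refine (summable_prod_of_nonneg hf0).mpr ⟨hfrow, ?_⟩
      refine Summable.of_nonneg_of_le (fun s => tsum_nonneg fun j => hf0 (s, j)) ?_ hsT
      intro s; rw [hfrowsum s]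
    have hswap : (∑' s, α s * T s) = ∑' j, ∑' s, f s j := by
      rw [← tsum_congr hfrowsum]
      exact (Summable.tsum_comm' hfunc hfrow hfcol).symm
    have hcolsum : ∀ j, (∑' s, f s j)
        = b j * ∑' s, α s * v δ (Matrix.vecMul (ξs s) (M^(j+2))) := by
      intro j
      rw [← tsum_mul_left]
      exact tsum_congr fun s => by rw [hfdef]; ring
    have hJj : ∀ j, (∑' s, α s * v δ (Matrix.vecMul (ξs s) (M^(j+2))))
        ≤ v δ (Matrix.vecMul ξ (M^(j+2))) := fun j =>
      v_jensen hM hu0 huC hv hδ (vecMul_mem (IsStochastic.pow hM (j+2)) hξ)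
        (split_pushforward (IsStochastic.pow hM (j+2)) hsp)
    have hScol0 : ∀ j, 0 ≤ (∑' s, α s * v δ (Matrix.vecMul (ξs s) (M^(j+2)))) := fun j =>
      tsum_nonneg fun s => mul_nonneg (hsp.1 s)
        (hv0 _ (vecMul_mem (IsStochastic.pow hM (j+2)) (hsp.2.1 s)))
    have hScolC : ∀ j, (∑' s, α s * v δ (Matrix.vecMul (ξs s) (M^(j+2)))) ≤ C := fun j =>
      le_trans (hJj j) (hvC _ (vecMul_mem (IsStochastic.pow hM (j+2)) hξ))
    have hsum1 : Summable fun j => b j * ∑' s, α s * v δ (Matrix.vecMul (ξs s) (M^(j+2))) :=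
      summable_bound hbsum hb0 (fun j => abs_le_of_bounds (hScol0 j) (hScolC j))
    have hsum2 : Summable fun j => b j * v δ (Matrix.vecMul ξ (M^(j+2))) :=
      summable_bound hbsum hb0 (fun j => hvabs _ (IsStochastic.pow hM (j+2)) _ hξ)
    have hBpart : (∑' s, B1 s) ≤ ∑' j, b (j+1) * v δ (Matrix.vecMul ξ (M^(j+2))) := by
      have e1 : (∑' s, B1 s) = δ' * ∑' s, α s * T s := by rw [hB1def]; exact tsum_mul_left
      have e2 : (∑' s, α s * T s) ≤ ∑' j, b j * v δ (Matrix.vecMul ξ (M^(j+2))) := by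
        rw [hswap, tsum_congr hcolsum]
        refine Summable.tsum_le_tsum (fun j => ?_) hsum1 hsum2
        exact mul_le_mul_of_nonneg_left (hJj j) (hb0 j)
      calc (∑' s, B1 s) = δ' * ∑' s, α s * T s := e1
        _ ≤ δ' * ∑' j, b j * v δ (Matrix.vecMul ξ (M^(j+2))) := by
            refine mul_le_mul_of_nonneg_left e2 hδ'0
        _ = ∑' j, δ' * (b j * v δ (Matrix.vecMul ξ (M^(j+2)))) := tsum_mul_left.symm
        _ = ∑' j, b (j+1) * v δ (Matrix.vecMul ξ (M^(j+2))) := by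
            refine tsum_congr fun j => ?_
            rw [← mul_assoc, hbsucc j]
    -- reassemble against w ξ
    have hwξ : w ξ = a * v δ ξ + (b 0 * v δ (Matrix.vecMul ξ (M^(0+1)))
        + ∑' j, b (j+1) * v δ (Matrix.vecMul ξ (M^(j+1+1)))) := by
      rw [hwval]
      congr 1
      exact Summable.tsum_eq_zero_add (hsF ξ hξ)
    have hpow1 : Matrix.vecMul ξ (M^(0+1)) = Matrix.vecMul ξ M := by rw [pow_one]
    have hpow2 : ∀ j : ℕ, (M : Matrix K K ℝ)^(j+1+1) = M^(j+2) := fun j => rfl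
    rw [hpay, hwξ, hpow1]
    have : (∑' j, b (j+1) * v δ (Matrix.vecMul ξ (M^(j+1+1))))
        = ∑' j, b (j+1) * v δ (Matrix.vecMul ξ (M^(j+2))) := by
      exact tsum_congr fun j => by rw [hpow2 j]
    rw [this]
    linarith
  -- compare and evaluate at πM
  have hcomp := v_le_of_supersolution hM hu0 huC hv hδ' hw0 hwB hsup πM hπ
  have hwπ : w πM = (a + ∑' j, b j) * v δ πM := by
    rw [hwval]
    have h1 : ∀ j : ℕ, b j * v δ (Matrix.vecMul πM (M^(j+1))) = b j * v δ πM := by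
      intro j; rw [vecMul_pow_inv hπinv]
    rw [tsum_congr h1, tsum_mul_right]
    ring
  have hbsumval : (∑' j, b j) = a * (δ'-δ) * (1-δ')⁻¹ := by
    have h1 : ∀ j : ℕ, b j = (a * (δ'-δ)) * δ'^j := fun j => rfl
    rw [tsum_congr h1, tsum_mul_left, tsum_geometric_of_lt_one hδ'0 hδ'.2]
  have hone : a + a * (δ'-δ) * (1-δ')⁻¹ = 1 := by
    rw [hadef]
    field_simp
    ring
  rw [hwπ, hbsumval, hone, one_mul] at hcomp
  exact hcomp

end Antitone


/-! ### Resolvent vector -/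

section Resolvent

variable (hM : IsStochastic M)

lemma mulVec_pow_nonneg (hM : IsStochastic M) {g : K → ℝ} (hg0 : ∀ ℓ, 0 ≤ g ℓ)
    (n : ℕ) (m : K) : 0 ≤ ((M^n).mulVec g) m := by
  simp only [Matrix.mulVec, dotProduct]
  exact Finset.sum_nonneg fun j _ => mul_nonneg ((IsStochastic.pow hM n).1 m j) (hg0 j)

lemma mulVec_pow_le (hM : IsStochastic M) {g : K → ℝ} {Cg : ℝ}
    (hg0 : ∀ ℓ, 0 ≤ g ℓ) (hgC : ∀ ℓ, g ℓ ≤ Cg) (n : ℕ) (m : K) :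
    ((M^n).mulVec g) m ≤ Cg := by
  have hp := IsStochastic.pow hM n
  simp only [Matrix.mulVec, dotProduct]
  calc (∑ j, (M^n) m j * g j) ≤ ∑ j, (M^n) m j * Cg :=
        Finset.sum_le_sum fun j _ => mul_le_mul_of_nonneg_left (hgC j) (hp.1 m j)
    _ = Cg := by rw [← Finset.sum_mul, hp.2 m, one_mul]

lemma rv_summable (hM : IsStochastic M) {δ' : ℝ} (hδ'0 : 0 ≤ δ') (hδ'1 : δ' < 1)
    {g : K → ℝ} {Cg : ℝ} (hg0 : ∀ ℓ, 0 ≤ g ℓ) (hgC : ∀ ℓ, g ℓ ≤ Cg) (m : K) :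
    Summable fun n : ℕ => δ'^n * ((M^n).mulVec g) m := by
  refine Summable.of_abs (Summable.of_nonneg_of_le (fun n => abs_nonneg _) (fun n => ?_)
    ((summable_geometric_of_lt_one hδ'0 hδ'1).mul_right Cg))
  rw [abs_of_nonneg (mul_nonneg (pow_nonneg hδ'0 n) (mulVec_pow_nonneg hM hg0 n m))]
  exact mul_le_mul_of_nonneg_left (mulVec_pow_le hM hg0 hgC n m) (pow_nonneg hδ'0 n)

lemma rv_nonneg (hM : IsStochastic M) {δ' : ℝ} (hδ'0 : 0 ≤ δ')
    {g : K → ℝ} (hg0 : ∀ ℓ, 0 ≤ g ℓ) (m : K) :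
    0 ≤ ∑' n : ℕ, δ'^n * ((M^n).mulVec g) m :=
  tsum_nonneg fun n => mul_nonneg (pow_nonneg hδ'0 n) (mulVec_pow_nonneg hM hg0 n m)

lemma rv_le (hM : IsStochastic M) {δ' : ℝ} (hδ'0 : 0 ≤ δ') (hδ'1 : δ' < 1)
    {g : K → ℝ} {Cg : ℝ} (hg0 : ∀ ℓ, 0 ≤ g ℓ) (hgC : ∀ ℓ, g ℓ ≤ Cg) (m : K) :
    (∑' n : ℕ, δ'^n * ((M^n).mulVec g) m) ≤ (1-δ')⁻¹ * Cg := by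
  calc (∑' n : ℕ, δ'^n * ((M^n).mulVec g) m) ≤ ∑' n : ℕ, δ'^n * Cg := by
        refine Summable.tsum_le_tsum (fun n => mul_le_mul_of_nonneg_left
            (mulVec_pow_le hM hg0 hgC n m) (pow_nonneg hδ'0 n))
          (rv_summable hM hδ'0 hδ'1 hg0 hgC m)
          ((summable_geometric_of_lt_one hδ'0 hδ'1).mul_right Cg)
    _ = (1-δ')⁻¹ * Cg := by
        rw [tsum_mul_right, tsum_geometric_of_lt_one hδ'0 hδ'1]

lemma rv_rec (hM : IsStochastic M) {δ' : ℝ} (hδ'0 : 0 ≤ δ') (hδ'1 : δ' < 1)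
    {g : K → ℝ} {Cg : ℝ} (hg0 : ∀ ℓ, 0 ≤ g ℓ) (hgC : ∀ ℓ, g ℓ ≤ Cg) (m : K) :
    (∑' n : ℕ, δ'^n * ((M^n).mulVec g) m)
      = g m + δ' * (M.mulVec (fun m' => ∑' n : ℕ, δ'^n * ((M^n).mulVec g) m')) m := by
  rw [Summable.tsum_eq_zero_add (rv_summable hM hδ'0 hδ'1 hg0 hgC m)]
  congr 1
  · simp [Matrix.one_mulVec]
  · have h1 : ∀ n : ℕ, δ'^(n+1) * ((M^(n+1)).mulVec g) m
        = ∑ j, δ' * (M m j * (δ'^n * ((M^n).mulVec g) j)) := by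
      intro n
      rw [pow_succ' M n, ← Matrix.mulVec_mulVec]
      simp only [Matrix.mulVec, dotProduct, pow_succ']
      rw [Finset.mul_sum]
      exact Finset.sum_congr rfl fun j _ => by ring
    rw [tsum_congr h1, Summable.tsum_finsetSum (fun j _ =>
      (((rv_summable hM hδ'0 hδ'1 hg0 hgC j).mul_left (M m j)).mul_left δ'))]
    simp only [Matrix.mulVec, dotProduct]
    rw [Finset.mul_sum]
    refine Finset.sum_congr rfl fun j _ => ?_
    rw [tsum_mul_left, tsum_mul_left]

lemma rv_pi (hM : IsStochastic M) {δ' : ℝ} (hδ'0 : 0 ≤ δ') (hδ'1 : δ' < 1)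
    {g : K → ℝ} {Cg : ℝ} (hg0 : ∀ ℓ, 0 ≤ g ℓ) (hgC : ∀ ℓ, g ℓ ≤ Cg)
    {πM : K → ℝ} (hπinv : Matrix.vecMul πM M = πM) :
    (∑ m, πM m * ∑' n : ℕ, δ'^n * ((M^n).mulVec g) m)
      = (1-δ')⁻¹ * ∑ ℓ, πM ℓ * g ℓ := by
  have h1 : ∀ m, πM m * (∑' n : ℕ, δ'^n * ((M^n).mulVec g) m)
      = ∑' n : ℕ, πM m * (δ'^n * ((M^n).mulVec g) m) := fun m => tsum_mul_left.symm
  rw [Finset.sum_congr rfl fun m _ => h1 m]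
  rw [← Summable.tsum_finsetSum (fun m _ => (rv_summable hM hδ'0 hδ'1 hg0 hgC m).mul_left (πM m))]
  have h2 : ∀ n : ℕ, (∑ m, πM m * (δ'^n * ((M^n).mulVec g) m))
      = δ'^n * ∑ ℓ, πM ℓ * g ℓ := by
    intro n
    have h3 : (∑ m, πM m * (δ'^n * ((M^n).mulVec g) m))
        = δ'^n * ∑ m, πM m * ((M^n).mulVec g) m := by
      rw [Finset.mul_sum]; exact Finset.sum_congr rfl fun m _ => by ring
    rw [h3]
    congr 1
    have h4 : (∑ m, πM m * ((M^n).mulVec g) m)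
        = ∑ j, (Matrix.vecMul πM (M^n)) j * g j := by
      simp only [Matrix.mulVec, Matrix.vecMul, dotProduct, Finset.mul_sum,
        Finset.sum_mul]
      rw [Finset.sum_comm]
      exact Finset.sum_congr rfl fun m _ => Finset.sum_congr rfl fun j _ => by ring
    rw [h4, vecMul_pow_inv hπinv]
  rw [tsum_congr h2, tsum_mul_right, tsum_geometric_of_lt_one hδ'0 hδ'1]

end Resolvent


/-! ### The key inequality: ∑ πℓ v δ (e ℓ) ≤ v δ' πM for δ ≤ δ' -/

section KeyIneq

variable (hM : IsStochastic M)
  (hu0 : ∀ ζ ∈ stdSimplex ℝ K, 0 ≤ u ζ) (huC : ∀ ζ ∈ stdSimplex ℝ K, u ζ ≤ C)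
  (hv : IsValueFamily M u C v)

include hM hu0 huC hv

lemma phi_le_psi {δ δ' : ℝ} (hδ : δ ∈ Set.Ico (0:ℝ) 1) (hδ' : δ' ∈ Set.Ico (0:ℝ) 1)
    (hle : δ ≤ δ') {πM : K → ℝ} (hπ : πM ∈ stdSimplex ℝ K)
    (hπinv : Matrix.vecMul πM M = πM) :
    (∑ ℓ, πM ℓ * v δ (dir ℓ)) ≤ v δ' πM := by
  have h1δ : (0:ℝ) < 1 - δ := by linarith [hδ.2]
  have h1δ' : (0:ℝ) < 1 - δ' := by linarith [hδ'.2]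
  have hδ0 := hδ.1
  have hδ'0 := hδ'.1
  have hC0 : 0 ≤ C :=
    le_trans (hu0 _ (dir_mem (Classical.arbitrary K))) (huC _ (dir_mem _))
  have hv0 : ∀ ζ ∈ stdSimplex ℝ K, 0 ≤ v δ ζ := fun ζ hζ => ((hv δ hδ).1 ζ hζ).1
  have hvC : ∀ ζ ∈ stdSimplex ℝ K, v δ ζ ≤ C := fun ζ hζ => ((hv δ hδ).1 ζ hζ).2
  rcases eq_or_lt_of_le hδ'0 with hzero | hδ'pos
  · -- δ' = 0, hence δ = 0
    have hδeq : δ = δ' := le_antisymm hle (by rw [← hzero]; exact hδ0)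
    rw [hδeq]
    exact dirac_split_le hM hu0 huC hv hδ' hπ
  -- main case 0 < δ'
  set p : ℝ := δ / δ' with hpdef
  have hp0 : 0 ≤ p := div_nonneg hδ0 hδ'0
  have hp1 : p ≤ 1 := (div_le_one hδ'pos).mpr hle
  have hpδ : p * δ' = δ := div_mul_cancel₀ _ (ne_of_gt hδ'pos)
  set a : ℝ := p * (1-δ') / (1-δ) with hadef
  have ha0 : 0 ≤ a := by positivity
  have hid1 : p * (1-δ') = a * (1-δ) := (div_mul_cancel₀ _ (ne_of_gt h1δ)).symm
  set κ : ℝ := (1-p) * (1-δ') / (1-δ) with hκdef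
  have hκ0 : 0 ≤ κ := by
    have : 0 ≤ 1 - p := by linarith
    positivity
  have hid3 : κ * (1-δ) = (1-p) * (1-δ') := div_mul_cancel₀ _ (ne_of_gt h1δ)
  have hid2 : (1-p) * δ' * a = κ * δ := by
    rw [hadef, hκdef, ← hpδ]
    field_simp
  clear_value p a κ
  -- the Dirac values
  set g : K → ℝ := fun ℓ => v δ (dir ℓ) with hgdef
  have hg0 : ∀ ℓ, 0 ≤ g ℓ := fun ℓ => hv0 _ (dir_mem ℓ)
  have hgC : ∀ ℓ, g ℓ ≤ C := fun ℓ => hvC _ (dir_mem ℓ)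
  have hgrec : ∀ ℓ, δ * v δ (Matrix.vecMul (dir ℓ) M) = g ℓ - (1-δ) * u (dir ℓ) := by
    intro ℓ
    have := v_dir hM hu0 huC hv hδ ℓ
    rw [hgdef]
    simp only
    linarith
  -- the resolvent vector
  set R0 : K → ℝ := fun m => ∑' n : ℕ, δ'^n * ((M^n).mulVec g) m with hR0def
  set R : K → ℝ := fun m => κ * R0 m with hRdef
  have hR00 : ∀ m, 0 ≤ R0 m := fun m => rv_nonneg hM hδ'0 hg0 m
  have hR0le : ∀ m, R0 m ≤ (1-δ')⁻¹ * C := fun m => rv_le hM hδ'0 hδ'.2 hg0 hgC m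
  have hR0 : ∀ m, 0 ≤ R m := fun m => mul_nonneg hκ0 (hR00 m)
  have hRrec : ∀ m, R m = κ * g m + δ' * (M.mulVec R) m := by
    intro m
    have h1 := rv_rec hM hδ'0 hδ'.2 hg0 hgC m
    have h2 : (M.mulVec R) m = κ * (M.mulVec R0) m := by
      simp only [hRdef, Matrix.mulVec, dotProduct, Finset.mul_sum]
      exact Finset.sum_congr rfl fun j _ => by ring
    rw [hRdef]
    simp only
    rw [h2]
    calc κ * R0 m = κ * (g m + δ' * (M.mulVec R0) m) := by rw [hR0def]; rw [← h1]
      _ = κ * g m + δ' * (κ * (M.mulVec R0) m) := by ring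
  set SR : ℝ := ∑ m, R m with hSRdef
  have hSR0 : 0 ≤ SR := Finset.sum_nonneg fun m _ => hR0 m
  -- dot products with simplex elements
  have hdot0 : ∀ ζ ∈ stdSimplex ℝ K, 0 ≤ ∑ m, ζ m * R m :=
    fun ζ hζ => Finset.sum_nonneg fun m _ => mul_nonneg (hζ.1 m) (hR0 m)
  have hdotB : ∀ ζ ∈ stdSimplex ℝ K, (∑ m, ζ m * R m) ≤ SR := by
    intro ζ hζ
    rw [hSRdef]
    refine Finset.sum_le_sum fun m _ => ?_
    calc ζ m * R m ≤ 1 * R m :=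
          mul_le_mul_of_nonneg_right (simplex_le_one hζ m) (hR0 m)
      _ = R m := one_mul _
  -- epsilon argument
  have hmain : ∀ ε' : ℝ, 0 < ε' → (∑ ℓ, πM ℓ * g ℓ) ≤ v δ' πM + a * ε' / (1-δ') := by
    intro ε' hε'
    set c₀ : ℝ := a * ε' / (1-δ') with hc₀def
    have hc₀0 : 0 ≤ c₀ := by positivity
    have hc₀id : (1-δ') * c₀ = a * ε' := by
      rw [hc₀def]; field_simp
    set w : (K → ℝ) → ℝ := fun ζ => a * v δ ζ + (∑ m, ζ m * R m) - c₀ with hwdef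
    have hwval : ∀ ζ, w ζ = a * v δ ζ + (∑ m, ζ m * R m) - c₀ := fun ζ => rfl
    set B : ℝ := a * C + SR + c₀ with hBdef
    have hwabs : ∀ ζ ∈ stdSimplex ℝ K, |w ζ| ≤ B := by
      intro ζ hζ
      rw [abs_le]
      constructor
      · have h1 := hdot0 ζ hζ
        have h2 := mul_nonneg ha0 (hv0 ζ hζ)
        rw [hwval, hBdef]
        have h3 := mul_nonneg ha0 hC0
        linarith
      · have h1 := hdotB ζ hζ
        have h2 := mul_le_mul_of_nonneg_left (hvC ζ hζ) ha0
        rw [hwval, hBdef]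
        linarith
    -- the subsolution property
    have hsub : ∀ ξ ∈ stdSimplex ℝ K, ∃ α ξs, IsSplit ξ α ξs ∧
        w ξ ≤ splitPayoff M u δ' w α ξs := by
      intro ξ hξ
      obtain ⟨α, ξs, hsp, hnear⟩ := v_near_split hM hu0 huC hv hδ hξ hε'
      refine ⟨mixW p α (fun ℓ => (1-p) * ξ ℓ), mixB ξs,
        mix_isSplit hp0 hp1 hξ hsp, ?_⟩
      -- bound |w| terms for summability
      have hGabs : ∀ ζ ∈ stdSimplex ℝ K,
          |(1-δ') * u ζ + δ' * w (Matrix.vecMul ζ M)| ≤ (1-δ') * C + δ' * B := by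
        intro ζ hζ
        have h1 : |(1-δ') * u ζ| ≤ (1-δ') * C := by
          rw [abs_of_nonneg (mul_nonneg (le_of_lt h1δ') (hu0 ζ hζ))]
          exact mul_le_mul_of_nonneg_left (huC ζ hζ) (le_of_lt h1δ')
        have h2 : |δ' * w (Matrix.vecMul ζ M)| ≤ δ' * B := by
          rw [abs_mul, abs_of_nonneg hδ'0]
          exact mul_le_mul_of_nonneg_left (hwabs _ (vecMul_mem hM hζ)) hδ'0
        calc |(1-δ') * u ζ + δ' * w (Matrix.vecMul ζ M)|
            ≤ |(1-δ') * u ζ| + |δ' * w (Matrix.vecMul ζ M)| := abs_add_le _ _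
          _ ≤ (1-δ') * C + δ' * B := add_le_add h1 h2
      have hsG : Summable fun s => α s * ((1-δ') * u (ξs s) + δ' * w (Matrix.vecMul (ξs s) M)) :=
        summable_bound (split_summable hsp) hsp.1 (fun s => hGabs _ (hsp.2.1 s))
      have hsG' : Summable fun s =>
          p * (α s * ((1-δ') * u (ξs s) + δ' * w (Matrix.vecMul (ξs s) M))) := hsG.mul_left p
      -- payoff of the mixed split
      have hpay : splitPayoff M u δ' w (mixW p α (fun ℓ => (1-p) * ξ ℓ)) (mixB ξs)
          = p * (∑' s, α s * ((1-δ') * u (ξs s) + δ' * w (Matrix.vecMul (ξs s) M)))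
            + ∑ ℓ, (1-p) * ξ ℓ * ((1-δ') * u (dir ℓ) + δ' * w (Matrix.vecMul (dir ℓ) M)) := by
        unfold splitPayoff
        exact mix_tsum p α ξs (fun ℓ => (1-p) * ξ ℓ)
          (fun x => (1-δ') * u x + δ' * w (Matrix.vecMul x M))
          (hsG'.congr fun s => by ring)
      -- decompose SP
      set Su : ℝ := ∑' s, α s * u (ξs s) with hSudef
      set Sv : ℝ := ∑' s, α s * v δ (Matrix.vecMul (ξs s) M) with hSvdef
      set D : ℕ → ℝ := fun s => ∑ m, (Matrix.vecMul (ξs s) M) m * R m with hDdef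
      set SD : ℝ := ∑' s, α s * D s with hSDdef
      have hsu : Summable fun s => α s * u (ξs s) :=
        summable_bound (split_summable hsp) hsp.1
          (fun s => abs_le_of_bounds (hu0 _ (hsp.2.1 s)) (huC _ (hsp.2.1 s)))
      have hsv : Summable fun s => α s * v δ (Matrix.vecMul (ξs s) M) :=
        summable_bound (split_summable hsp) hsp.1
          (fun s => abs_le_of_bounds (hv0 _ (vecMul_mem hM (hsp.2.1 s)))
            (hvC _ (vecMul_mem hM (hsp.2.1 s))))
      have hsD : Summable fun s => α s * D s :=
        summable_bound (split_summable hsp) hsp.1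
          (fun s => abs_le_of_bounds (hdot0 _ (vecMul_mem hM (hsp.2.1 s)))
            (hdotB _ (vecMul_mem hM (hsp.2.1 s))))
      have hterm : ∀ s, α s * ((1-δ') * u (ξs s) + δ' * w (Matrix.vecMul (ξs s) M))
          = ((1-δ') * (α s * u (ξs s)) + (δ' * a) * (α s * v δ (Matrix.vecMul (ξs s) M)))
            + (δ' * (α s * D s) + (-(δ' * c₀)) * α s) := by
        intro s
        rw [hwval, hDdef]
        ring
      have hSP : (∑' s, α s * ((1-δ') * u (ξs s) + δ' * w (Matrix.vecMul (ξs s) M)))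
          = ((1-δ') * Su + (δ' * a) * Sv) + (δ' * SD + (-(δ' * c₀))) := by
        rw [tsum_congr hterm]
        rw [Summable.tsum_add ((hsu.mul_left _).add (hsv.mul_left _))
          ((hsD.mul_left _).add ((split_summable hsp).mul_left _))]
        rw [Summable.tsum_add (hsu.mul_left _) (hsv.mul_left _)]
        rw [Summable.tsum_add (hsD.mul_left _) ((split_summable hsp).mul_left _)]
        rw [tsum_mul_left, tsum_mul_left, tsum_mul_left, tsum_mul_left, hsp.2.2.1, mul_one]
      -- SD equals the dot product at the pushforward mean
      have hSDval : SD = ∑ m, (Matrix.vecMul ξ M) m * R m := by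
        rw [hSDdef]
        have h1 : ∀ s, α s * D s = ∑ m, (α s * (Matrix.vecMul (ξs s) M) m) * R m := by
          intro s
          rw [hDdef]
          simp only
          rw [Finset.mul_sum]
          exact Finset.sum_congr rfl fun m _ => by ring
        rw [tsum_congr h1]
        rw [Summable.tsum_finsetSum (fun m _ =>
          ((split_summable_coord (split_pushforward hM hsp) m).mul_right (R m)))]
        refine Finset.sum_congr rfl fun m _ => ?_
        rw [tsum_mul_right, split_tsum_vecMul hsp M m]
      -- the δ-payoff decomposition and near-optimality
      have hsplitδ : splitPayoff M u δ (v δ) α ξs = (1-δ) * Su + δ * Sv := by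
        unfold splitPayoff
        have h1 : ∀ s, α s * ((1-δ) * u (ξs s) + δ * v δ (Matrix.vecMul (ξs s) M))
            = (1-δ) * (α s * u (ξs s)) + δ * (α s * v δ (Matrix.vecMul (ξs s) M)) := by
          intro s; ring
        rw [tsum_congr h1, Summable.tsum_add (hsu.mul_left _) (hsv.mul_left _),
          tsum_mul_left, tsum_mul_left]
      have hnear' : v δ ξ - ε' < (1-δ) * Su + δ * Sv := by rw [← hsplitδ]; exact hnear
      -- Dirac part computation
      have hdirdot : ∀ ℓ, (∑ m, (Matrix.vecMul (dir ℓ) M) m * R m) = (M.mulVec R) ℓ := by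
        intro ℓ
        rw [vecMul_dir]
        simp only [Matrix.mulVec, dotProduct]
      have hℓterm : ∀ ℓ, (1-p) * ξ ℓ * ((1-δ') * u (dir ℓ) + δ' * w (Matrix.vecMul (dir ℓ) M))
          = κ * (ξ ℓ * g ℓ) + ((1-p) * δ') * (ξ ℓ * (M.mulVec R) ℓ)
            - ((1-p) * δ') * (ξ ℓ * c₀) := by
        intro ℓ
        rw [hwval, hdirdot ℓ]
        linear_combination (ξ ℓ * v δ (Matrix.vecMul (dir ℓ) M)) * hid2
          + (κ * ξ ℓ) * (hgrec ℓ) - (ξ ℓ * u (dir ℓ)) * hid3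
      have hTerm2 : (∑ ℓ, (1-p) * ξ ℓ * ((1-δ') * u (dir ℓ) + δ' * w (Matrix.vecMul (dir ℓ) M)))
          = κ * (∑ ℓ, ξ ℓ * g ℓ) + ((1-p) * δ') * (∑ ℓ, ξ ℓ * (M.mulVec R) ℓ)
            - ((1-p) * δ') * c₀ := by
        rw [Finset.sum_congr rfl fun ℓ _ => hℓterm ℓ]
        rw [Finset.sum_sub_distrib, Finset.sum_add_distrib,
          ← Finset.mul_sum, ← Finset.mul_sum, ← Finset.mul_sum]
        have hξc : (∑ ℓ, ξ ℓ * c₀) = c₀ := by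
          rw [← Finset.sum_mul, hξ.2, one_mul]
        rw [hξc]
      have hdotM : (∑ ℓ, ξ ℓ * (M.mulVec R) ℓ) = ∑ m, (Matrix.vecMul ξ M) m * R m := by
        simp only [Matrix.mulVec, Matrix.vecMul, dotProduct, Finset.mul_sum,
          Finset.sum_mul]
        rw [Finset.sum_comm]
        exact Finset.sum_congr rfl fun m _ => Finset.sum_congr rfl fun ℓ _ => by ring
      have hkey' : (∑ m, ξ m * R m)
          = κ * (∑ ℓ, ξ ℓ * g ℓ) + δ' * ∑ m, (Matrix.vecMul ξ M) m * R m := by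
        have h1 : ∀ m, ξ m * R m = κ * (ξ m * g m) + δ' * (ξ m * (M.mulVec R) m) := by
          intro m
          rw [hRrec m]
          ring
        rw [Finset.sum_congr rfl fun m _ => h1 m, Finset.sum_add_distrib,
          ← Finset.mul_sum, ← Finset.mul_sum, ← hdotM]
      -- assemble the subsolution inequality
      set A : ℝ := (1-δ) * Su + δ * Sv with hAdef
      set XG : ℝ := ∑ ℓ, ξ ℓ * g ℓ with hXGdef
      set DM : ℝ := ∑ m, (Matrix.vecMul ξ M) m * R m with hDMdef
      have hpSP : p * (((1-δ') * Su + (δ' * a) * Sv) + (δ' * SD + (-(δ' * c₀))))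
          = a * A + δ * DM - δ * c₀ := by
        linear_combination Su * hid1 + (a * Sv + SD - c₀) * hpδ + δ * hSDval
      have hδsum : δ + (1-p) * δ' = δ' := by linear_combination -hpδ
      have hpayval : splitPayoff M u δ' w (mixW p α (fun ℓ => (1-p) * ξ ℓ)) (mixB ξs)
          = a * A + δ * DM - δ * c₀
            + (κ * XG + ((1-p) * δ') * DM - ((1-p) * δ') * c₀) := by
        rw [hpay, hSP, hpSP, hTerm2, hdotM]
      have hf1 : a * v δ ξ - a * ε' ≤ a * A := by
        have h1 := mul_le_mul_of_nonneg_left (le_of_lt hnear') ha0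
        rw [mul_sub] at h1
        exact h1
      have hDMc : δ * DM + ((1-p) * δ') * DM = δ' * DM := by
        linear_combination DM * hδsum
      have hc0c : δ * c₀ + ((1-p) * δ') * c₀ = δ' * c₀ := by
        linear_combination c₀ * hδsum
      have hc₀id' : c₀ - δ' * c₀ = a * ε' := by linear_combination hc₀id
      have hwξ : w ξ = a * v δ ξ + (κ * XG + δ' * DM) - c₀ := by
        rw [hwval, hkey']
      rw [hwξ, hpayval]
      linarith
    -- apply the subsolution comparison and evaluate at πM
    have hwle := le_v_of_subsolution hM hu0 huC hv hδ' hwabs hsub πM hπ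
    have hπR : (∑ m, πM m * R m) = κ * ((1-δ')⁻¹ * ∑ ℓ, πM ℓ * g ℓ) := by
      have h1 : ∀ m, πM m * R m = κ * (πM m * R0 m) := fun m => by
        rw [hRdef]; ring
      rw [Finset.sum_congr rfl fun m _ => h1 m, ← Finset.mul_sum,
        rv_pi hM hδ'0 hδ'.2 hg0 hgC hπinv]
    have hφle : (∑ ℓ, πM ℓ * g ℓ) ≤ v δ πM := dirac_split_le hM hu0 huC hv hδ hπ
    have h1pδ' : (1:ℝ) - p * δ' ≠ 0 := by rw [hpδ]; exact ne_of_gt h1δ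
    have hone : a + κ * (1-δ')⁻¹ = 1 := by
      rw [hadef, hκdef, ← hpδ]
      field_simp
      ring
    have hwπ : w πM = a * v δ πM + κ * ((1-δ')⁻¹ * ∑ ℓ, πM ℓ * g ℓ) - c₀ := by
      rw [hwval, hπR]
    have hcomb : (a + κ * (1-δ')⁻¹) * (∑ ℓ, πM ℓ * g ℓ) = ∑ ℓ, πM ℓ * g ℓ := by
      rw [hone, one_mul]
    have haφ : a * (∑ ℓ, πM ℓ * g ℓ) ≤ a * v δ πM :=
      mul_le_mul_of_nonneg_left hφle ha0
    have hgoal : (∑ ℓ, πM ℓ * g ℓ) - c₀ ≤ v δ' πM := by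
      rw [hwπ] at hwle
      nlinarith [hwle, haφ, hcomb]
    rw [hc₀def] at hgoal
    linarith
  -- conclude by letting ε' → 0
  refine le_of_forall_pos_le_add fun ε hε => ?_
  have haa : (0:ℝ) < a + 1 := by linarith
  set ε' : ℝ := ε * (1-δ') / (a+1) with hε'def
  have hε'pos : 0 < ε' := by positivity
  have h1 := hmain ε' hε'pos
  have h2 : a * ε' / (1-δ') = ε * (a / (a+1)) := by
    rw [hε'def]
    field_simp
  have h3 : a / (a+1) ≤ 1 := (div_le_one haa).mpr (by linarith)
  have h4 : ε * (a / (a+1)) ≤ ε * 1 :=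
    mul_le_mul_of_nonneg_left h3 (le_of_lt hε)
  rw [h2] at h1
  linarith

end KeyIneq


end MPAux

theorem markovian_persuasion_asymptotic_value_sandwich
    {K : Type*} [Fintype K] [Nonempty K] [DecidableEq K]
    (M : Matrix K K ℝ) (hM : IsStochastic M)
    (herg : ∃ N : ℕ, 1 ≤ N ∧ ∀ i j, 0 < (M ^ N) i j)
    (u : (K → ℝ) → ℝ) (hu0 : ∀ ξ ∈ stdSimplex ℝ K, 0 ≤ u ξ)
    (husc : UpperSemicontinuousOn u (stdSimplex ℝ K))
    (C : ℝ) (hC : IsLUB (u '' stdSimplex ℝ K) C)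
    (v : ℝ → (K → ℝ) → ℝ) (hv : IsValueFamily M u C v)
    (πM : K → ℝ) (hπ : πM ∈ stdSimplex ℝ K) (hπinv : Matrix.vecMul πM M = πM)
    (hπuniq : ∀ π' ∈ stdSimplex ℝ K, Matrix.vecMul π' M = π' → π' = πM)
    (hπpos : ∀ ℓ, 0 < πM ℓ) :
    ∃ vinf : ℝ,
      Filter.Tendsto (fun δ => v δ πM) (nhdsWithin 1 (Set.Iio 1)) (nhds vinf) ∧
      ∀ δ : ℝ, 0 ≤ δ → δ < 1 →
        (∑ ℓ, πM ℓ * v δ (fun m => if m = ℓ then (1 : ℝ) else 0)) ≤ vinf ∧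
        vinf ≤ v δ πM := by
  classical
  have huC : ∀ ζ ∈ stdSimplex ℝ K, u ζ ≤ C := fun ζ hζ =>
    hC.1 (Set.mem_image_of_mem u hζ)
  set E : Set ℝ := (fun δ => v δ πM) '' (Set.Ico 0 1) with hE
  have h01 : (0:ℝ) ∈ Set.Ico (0:ℝ) 1 := ⟨le_rfl, one_pos⟩
  have hEne : E.Nonempty := ⟨v 0 πM, ⟨0, h01, rfl⟩⟩
  have hψ0 : ∀ δ ∈ Set.Ico (0:ℝ) 1, 0 ≤ v δ πM := fun δ hδ => ((hv δ hδ).1 πM hπ).1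
  have hEbdd : BddBelow E := ⟨0, by rintro x ⟨δ, hδ, rfl⟩; exact hψ0 δ hδ⟩
  set vinf : ℝ := sInf E with hvinfdef
  have hvinf_le : ∀ δ ∈ Set.Ico (0:ℝ) 1, vinf ≤ v δ πM := fun δ hδ =>
    csInf_le hEbdd ⟨δ, hδ, rfl⟩
  have hanti : ∀ δ ∈ Set.Ico (0:ℝ) 1, ∀ δ' ∈ Set.Ico (0:ℝ) 1, δ ≤ δ' →
      v δ' πM ≤ v δ πM := fun δ hδ δ' hδ' h =>
    MPAux.psi_antitone hM hu0 huC hv hδ hδ' h hπ hπinv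
  have hφ : ∀ δ ∈ Set.Ico (0:ℝ) 1, ∀ δ' ∈ Set.Ico (0:ℝ) 1,
      (∑ ℓ, πM ℓ * v δ (MPAux.dir ℓ)) ≤ v δ' πM := by
    intro δ hδ δ' hδ'
    rcases le_total δ δ' with h | h
    · exact MPAux.phi_le_psi hM hu0 huC hv hδ hδ' h hπ hπinv
    · exact le_trans (MPAux.phi_le_psi hM hu0 huC hv hδ hδ le_rfl hπ hπinv)
        (hanti δ' hδ' δ hδ h)
  refine ⟨vinf, ?_, ?_⟩
  · rw [tendsto_order]
    constructor
    · intro x hx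
      have hev : Set.Ioo (0:ℝ) 1 ∈ nhdsWithin 1 (Set.Iio 1) :=
        Ioo_mem_nhdsLT_of_mem ⟨one_pos, le_rfl⟩
      filter_upwards [hev] with δ hδ
      exact lt_of_lt_of_le hx (hvinf_le δ ⟨le_of_lt hδ.1, hδ.2⟩)
    · intro x hx
      obtain ⟨y, ⟨δ0, hδ0, rfl⟩, hy⟩ := exists_lt_of_csInf_lt hEne hx
      have hev : Set.Ioo δ0 1 ∈ nhdsWithin 1 (Set.Iio 1) :=
        Ioo_mem_nhdsLT_of_mem ⟨hδ0.2, le_rfl⟩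
      filter_upwards [hev] with δ hδ
      have h1 : v δ πM ≤ v δ0 πM :=
        hanti δ0 hδ0 δ ⟨le_trans hδ0.1 (le_of_lt hδ.1), hδ.2⟩ (le_of_lt hδ.1)
      exact lt_of_le_of_lt h1 hy
  · intro δ h0 h1
    constructor
    · have h2 : (∑ ℓ, πM ℓ * v δ (MPAux.dir ℓ)) ≤ vinf :=
        le_csInf hEne (by rintro y ⟨δ', hδ', rfl⟩; exact hφ δ ⟨h0, h1⟩ δ' hδ')
      exact h2
    · exact hvinf_le δ ⟨h0, h1⟩
end
end

section
/- Suppose ξ ∈ Δ(K) satisfies u(ξ) = (Cav u)(ξ). Then for every δ ∈ [0,1) the trivial split (revealing no information) is optimal at ξ; in particular v_δ(ξ) = (1−δ)·u(ξ) + δ·v_δ(ξM). -/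
open scoped BigOperators

noncomputable section

/-- The concavification of `g`: the smallest concave majorant of `g` on `Δ(K)`. -/
def cav {K : Type*} [Fintype K] (g : (K → ℝ) → ℝ) (ξ : K → ℝ) : ℝ :=
  sInf { y : ℝ | ∃ h : (K → ℝ) → ℝ, ConcaveOn ℝ (stdSimplex ℝ K) h ∧
    (∀ p ∈ stdSimplex ℝ K, g p ≤ h p) ∧ y = h ξ }

/-!
Splits of `x` and `y` can be interleaved into a split of `a • x + b • y` whose payoff is the
same convex combination of payoffs; hence every `v δ` is concave on `Δ(K)`. For a concave
majorant `h` of `u`, the map `p ↦ (1 - δ) h(p) + δ v_δ(pM)` is then concave and dominates the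
stage payoff, so Jensen's inequality (for countable splits, through their partial sums) bounds
the payoff of every split of `ξ` by `(1 - δ) h(ξ) + δ v_δ(ξM)`. The infimum over `h` is
`(1 - δ) u(ξ) + δ v_δ(ξM)` when `u(ξ) = cav u (ξ)`, and the trivial split attains it.
-/

section

open scoped Pointwise

variable {K : Type*} [Fintype K]

lemma IsStochastic.vecMul_mem_stdSimplex {M : Matrix K K ℝ} (hM : IsStochastic M) {p : K → ℝ}
    (hp : p ∈ stdSimplex ℝ K) : Matrix.vecMul p M ∈ stdSimplex ℝ K := by
  refine ⟨fun j => Finset.sum_nonneg fun i _ => mul_nonneg (hp.1 i) (hM.1 i j), ?_⟩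
  simp only [Matrix.vecMul, dotProduct]
  rw [Finset.sum_comm]
  simp only [← Finset.mul_sum, hM.2, mul_one, hp.2]

lemma abs_apply_le_one_of_mem_stdSimplex {p : K → ℝ} (hp : p ∈ stdSimplex ℝ K) (ℓ : K) :
    |p ℓ| ≤ 1 :=
  abs_le.2 ⟨by linarith [hp.1 ℓ], stdSimplex.le_one ⟨p, hp⟩ ℓ⟩

lemma exists_mem_stdSimplex_eq_sum_smul [Nonempty K] {d : K → ℝ} (hd : 0 ≤ d) :
    ∃ η ∈ stdSimplex ℝ K, d = (∑ ℓ, d ℓ) • η := by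
  classical
  rcases (Finset.sum_nonneg fun ℓ _ => hd ℓ).eq_or_lt with h0 | hpos
  · refine ⟨_, single_mem_stdSimplex ℝ (Classical.arbitrary K), funext fun ℓ => ?_⟩
    rw [← h0, zero_smul]
    exact (Finset.sum_eq_zero_iff_of_nonneg fun i _ => hd i).mp h0.symm ℓ (Finset.mem_univ ℓ)
  · refine ⟨(∑ ℓ, d ℓ)⁻¹ • d, ⟨fun ℓ => smul_nonneg (inv_nonneg.2 hpos.le) (hd ℓ), ?_⟩, ?_⟩
    · simp only [Pi.smul_apply, smul_eq_mul, ← Finset.mul_sum, inv_mul_cancel₀ hpos.ne']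
    · rw [smul_smul, mul_inv_cancel₀ hpos.ne', one_smul]

lemma ConcaveOn.sum_mul_le_of_add_sum_smul_eq {E ι : Type*} [AddCommGroup E] [Module ℝ E]
    {S : Set E} {g : E → ℝ} (hg : ConcaveOn ℝ S g) (hg0 : ∀ p ∈ S, 0 ≤ g p) {I : Finset ι}
    {w : ι → ℝ} {p : ι → E} (hw : ∀ i ∈ I, 0 ≤ w i) (hp : ∀ i ∈ I, p i ∈ S) {t : ℝ} (ht : 0 ≤ t)
    {η : E} (hη : η ∈ S) (hsum : t + ∑ i ∈ I, w i = 1) {x : E}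
    (hx : t • η + ∑ i ∈ I, w i • p i = x) :
    ∑ i ∈ I, w i * g (p i) ≤ g x := by
  have hJensen := hg.le_map_sum (t := I.insertNone) (w := fun i => i.elim t w)
    (p := fun i => i.elim η p) (by rintro (_ | i) hi; exacts [ht, hw i (by simpa using hi)])
    (by simpa using hsum) (by rintro (_ | i) hi; exacts [hη, hp i (by simpa using hi)])
  simp only [Finset.sum_insertNone, Option.elim, smul_eq_mul, hx] at hJensen
  linarith [mul_nonneg ht (hg0 η hη)]

section Interleave

/-- `f` on the even and `g` on the odd indices. -/
def interleave {X : Type*} (f g : ℕ → X) (n : ℕ) : X :=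
  Sum.elim f g (Equiv.natSumNatEquivNat.symm n)

variable {X Y Z : Type*}

lemma interleave_comp₂ (F : X → Y → Z) (f g : ℕ → X) (f' g' : ℕ → Y) (n : ℕ) :
    F (interleave f g n) (interleave f' g' n) =
      interleave (fun k => F (f k) (f' k)) (fun k => F (g k) (g' k)) n := by
  unfold interleave
  cases Equiv.natSumNatEquivNat.symm n <;> rfl

lemma interleave_mem {P : X → Prop} {f g : ℕ → X} (hf : ∀ k, P (f k)) (hg : ∀ k, P (g k))
    (n : ℕ) : P (interleave f g n) := by
  unfold interleave
  cases Equiv.natSumNatEquivNat.symm n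
  exacts [hf _, hg _]

lemma tsum_interleave {f g : ℕ → ℝ} (hf : Summable f) (hg : Summable g) :
    ∑' n, interleave f g n = ∑' n, f n + ∑' n, g n :=
  (Equiv.natSumNatEquivNat.symm.tsum_eq (Sum.elim f g)).trans (Summable.tsum_sum hf hg)

end Interleave

section Split

variable {ξ x y : K → ℝ} {α α₁ α₂ : ℕ → ℝ} {ξs ξs₁ ξs₂ : ℕ → K → ℝ}

lemma IsSplit.summable (hs : IsSplit ξ α ξs) : Summable α := by
  by_contra hα
  simpa [tsum_eq_zero_of_not_summable hα] using hs.2.2.1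

lemma IsSplit.summable_mul {f : (K → ℝ) → ℝ} {B : ℝ} (hs : IsSplit ξ α ξs)
    (hf : ∀ p ∈ stdSimplex ℝ K, |f p| ≤ B) : Summable fun s => α s * f (ξs s) :=
  (hs.summable.mul_right B).of_norm_bounded fun s => by
    rw [Real.norm_eq_abs, abs_mul, abs_of_nonneg (hs.1 s)]
    exact mul_le_mul_of_nonneg_left (hf _ (hs.2.1 s)) (hs.1 s)

lemma IsSplit.summable_mul_apply (hs : IsSplit ξ α ξs) (ℓ : K) :
    Summable fun s => α s * ξs s ℓ :=
  hs.summable_mul (f := fun p => p ℓ) fun _ hp => abs_apply_le_one_of_mem_stdSimplex hp ℓ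

lemma isSplit_trivial (hξ : ξ ∈ stdSimplex ℝ K) :
    IsSplit ξ (fun s => if s = 0 then 1 else 0) (fun _ => ξ) := by
  refine ⟨fun s => by positivity, fun _ => hξ, tsum_ite_eq 0 1, fun ℓ => ?_⟩
  simp only [ite_mul, one_mul, zero_mul]
  exact tsum_ite_eq 0 fun _ => ξ ℓ

lemma IsSplit.tsum_mul_le_of_concaveOn (hs : IsSplit ξ α ξs) (hξ : ξ ∈ stdSimplex ℝ K)
    {f g : (K → ℝ) → ℝ} (hg : ConcaveOn ℝ (stdSimplex ℝ K) g)
    (hf0 : ∀ p ∈ stdSimplex ℝ K, 0 ≤ f p) (hfg : ∀ p ∈ stdSimplex ℝ K, f p ≤ g p) :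
    ∑' s, α s * f (ξs s) ≤ g ξ := by
  have : Nonempty K := Finset.univ_nonempty_iff.mp
    (Finset.nonempty_of_sum_ne_zero (by rw [hξ.2]; exact one_ne_zero))
  refine Real.tsum_le_of_sum_range_le (fun s => mul_nonneg (hs.1 s) (hf0 _ (hs.2.1 s))) fun n =>
    (Finset.sum_le_sum fun s _ => mul_le_mul_of_nonneg_left (hfg _ (hs.2.1 s)) (hs.1 s)).trans ?_
  -- the mass not yet spent by the first `n` pieces is concentrated on one extra belief `η`
  set d := ξ - ∑ s ∈ Finset.range n, α s • ξs s with hd_def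
  have hd : 0 ≤ d := fun ℓ => by
    have := (hs.summable_mul_apply ℓ).sum_le_tsum (Finset.range n)
      fun s _ => mul_nonneg (hs.1 s) ((hs.2.1 s).1 ℓ)
    simp only [hd_def, Pi.sub_apply, Finset.sum_apply, Pi.smul_apply, smul_eq_mul, Pi.zero_apply]
    linarith [hs.2.2.2 ℓ]
  have hd_sum : ∑ ℓ, d ℓ = 1 - ∑ s ∈ Finset.range n, α s := by
    simp only [hd_def, Pi.sub_apply, Finset.sum_sub_distrib, hξ.2, Finset.sum_apply,
      Pi.smul_apply, smul_eq_mul]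
    rw [Finset.sum_comm]
    simp only [← Finset.mul_sum, fun s => (hs.2.1 s).2, mul_one]
  obtain ⟨η, hη, hdη⟩ := exists_mem_stdSimplex_eq_sum_smul hd
  exact hg.sum_mul_le_of_add_sum_smul_eq (fun p hp => (hf0 p hp).trans (hfg p hp))
    (fun s _ => hs.1 s) (fun s _ => hs.2.1 s) (Finset.sum_nonneg fun ℓ _ => hd ℓ) hη
    (by rw [hd_sum]; ring) (by rw [← hdη, hd_def, sub_add_cancel])

lemma IsSplit.tsum_interleave_mul (hs₁ : IsSplit x α₁ ξs₁) (hs₂ : IsSplit y α₂ ξs₂)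
    {f : (K → ℝ) → ℝ} {B : ℝ} (hf : ∀ p ∈ stdSimplex ℝ K, |f p| ≤ B) (a b : ℝ) :
    ∑' n, interleave (fun k => a * α₁ k) (fun k => b * α₂ k) n * f (interleave ξs₁ ξs₂ n) =
      a * ∑' s, α₁ s * f (ξs₁ s) + b * ∑' s, α₂ s * f (ξs₂ s) := by
  simp only [interleave_comp₂ (fun c p => c * f p), mul_assoc]
  rw [tsum_interleave ((hs₁.summable_mul hf).mul_left a) ((hs₂.summable_mul hf).mul_left b),
    tsum_mul_left, tsum_mul_left]

lemma IsSplit.interleave (hs₁ : IsSplit x α₁ ξs₁) (hs₂ : IsSplit y α₂ ξs₂) {a b : ℝ}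
    (ha : 0 ≤ a) (hb : 0 ≤ b) (hab : a + b = 1) :
    IsSplit (a • x + b • y) (interleave (fun k => a * α₁ k) (fun k => b * α₂ k))
      (interleave ξs₁ ξs₂) := by
  refine ⟨interleave_mem (fun k => mul_nonneg ha (hs₁.1 k)) (fun k => mul_nonneg hb (hs₂.1 k)),
    interleave_mem hs₁.2.1 hs₂.2.1, ?_, fun ℓ => ?_⟩
  · rw [tsum_interleave (hs₁.summable.mul_left a) (hs₂.summable.mul_left b), tsum_mul_left,
      tsum_mul_left, hs₁.2.2.1, hs₂.2.2.1, mul_one, mul_one, hab]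
  · rw [hs₁.tsum_interleave_mul hs₂ (f := fun p => p ℓ)
      (fun _ hp => abs_apply_le_one_of_mem_stdSimplex hp ℓ), hs₁.2.2.2 ℓ, hs₂.2.2.2 ℓ]
    rfl

end Split

section Payoff

variable {M : Matrix K K ℝ} {u w : (K → ℝ) → ℝ} {δ C : ℝ}

/-- `splitPayoff M u δ w α ξs` is `∑' s, α s * stagePayoff M u δ w (ξs s)` by definition. -/
def stagePayoff (M : Matrix K K ℝ) (u : (K → ℝ) → ℝ) (δ : ℝ) (w : (K → ℝ) → ℝ) (p : K → ℝ) :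
    ℝ :=
  (1 - δ) * u p + δ * w (Matrix.vecMul p M)

def splitPayoffs (M : Matrix K K ℝ) (u : (K → ℝ) → ℝ) (δ : ℝ) (w : (K → ℝ) → ℝ) (ξ : K → ℝ) :
    Set ℝ :=
  { r : ℝ | ∃ α ξs, IsSplit ξ α ξs ∧ r = splitPayoff M u δ w α ξs }

lemma stagePayoff_mem_Icc (hM : IsStochastic M) (hu : ∀ p ∈ stdSimplex ℝ K, u p ∈ Set.Icc 0 C)
    (hw : ∀ p ∈ stdSimplex ℝ K, w p ∈ Set.Icc 0 C) (hδ : δ ∈ Set.Ico (0 : ℝ) 1) {p : K → ℝ}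
    (hp : p ∈ stdSimplex ℝ K) : stagePayoff M u δ w p ∈ Set.Icc 0 C :=
  convex_Icc 0 C (hu p hp) (hw _ (hM.vecMul_mem_stdSimplex hp)) (by linarith [hδ.2]) hδ.1
    (sub_add_cancel 1 δ)

lemma abs_stagePayoff_le (hM : IsStochastic M) (hu : ∀ p ∈ stdSimplex ℝ K, u p ∈ Set.Icc 0 C)
    (hw : ∀ p ∈ stdSimplex ℝ K, w p ∈ Set.Icc 0 C) (hδ : δ ∈ Set.Ico (0 : ℝ) 1) {p : K → ℝ}
    (hp : p ∈ stdSimplex ℝ K) : |stagePayoff M u δ w p| ≤ C :=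
  have h := stagePayoff_mem_Icc hM hu hw hδ hp
  abs_le.2 ⟨by linarith [h.1, h.2], h.2⟩

lemma concaveOn_stagePayoff (hM : IsStochastic M) (hu : ConcaveOn ℝ (stdSimplex ℝ K) u)
    (hw : ConcaveOn ℝ (stdSimplex ℝ K) w) (hδ : δ ∈ Set.Ico (0 : ℝ) 1) :
    ConcaveOn ℝ (stdSimplex ℝ K) (stagePayoff M u δ w) := by
  have hwM : ConcaveOn ℝ (stdSimplex ℝ K) (w ∘ Matrix.vecMulLinear M) :=
    (hw.comp_linearMap _).subset (fun _ hp => hM.vecMul_mem_stdSimplex hp) (convex_stdSimplex ℝ K)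
  exact (hu.smul (by linarith [hδ.2])).add (hwM.smul hδ.1)

lemma smul_splitPayoffs_add_smul_subset (hM : IsStochastic M)
    (hu : ∀ p ∈ stdSimplex ℝ K, u p ∈ Set.Icc 0 C) (hw : ∀ p ∈ stdSimplex ℝ K, w p ∈ Set.Icc 0 C)
    (hδ : δ ∈ Set.Ico (0 : ℝ) 1) {x y : K → ℝ} {a b : ℝ} (ha : 0 ≤ a) (hb : 0 ≤ b)
    (hab : a + b = 1) :
    a • splitPayoffs M u δ w x + b • splitPayoffs M u δ w y ⊆
      splitPayoffs M u δ w (a • x + b • y) := by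
  rintro _ ⟨_, ⟨_, ⟨α₁, ξs₁, hs₁, rfl⟩, rfl⟩, _, ⟨_, ⟨α₂, ξs₂, hs₂, rfl⟩, rfl⟩, rfl⟩
  exact ⟨_, _, hs₁.interleave hs₂ ha hb hab,
    (hs₁.tsum_interleave_mul hs₂ (fun p hp => abs_stagePayoff_le hM hu hw hδ hp) a b).symm⟩

lemma splitPayoffs_nonempty {ξ : K → ℝ} (hξ : ξ ∈ stdSimplex ℝ K) :
    (splitPayoffs M u δ w ξ).Nonempty :=
  ⟨_, _, _, isSplit_trivial hξ, rfl⟩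

lemma splitPayoffs_bddAbove (hM : IsStochastic M) (hu : ∀ p ∈ stdSimplex ℝ K, u p ∈ Set.Icc 0 C)
    (hw : ∀ p ∈ stdSimplex ℝ K, w p ∈ Set.Icc 0 C) (hδ : δ ∈ Set.Ico (0 : ℝ) 1) {ξ : K → ℝ}
    (hξ : ξ ∈ stdSimplex ℝ K) : BddAbove (splitPayoffs M u δ w ξ) := by
  refine ⟨C, ?_⟩
  rintro _ ⟨α, ξs, hs, rfl⟩
  exact hs.tsum_mul_le_of_concaveOn hξ (concaveOn_const C (convex_stdSimplex ℝ K))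
    (fun p hp => (stagePayoff_mem_Icc hM hu hw hδ hp).1)
    (fun p hp => (stagePayoff_mem_Icc hM hu hw hδ hp).2)

lemma IsValueFamily.concaveOn (hM : IsStochastic M) (hu : ∀ p ∈ stdSimplex ℝ K, u p ∈ Set.Icc 0 C)
    {v : ℝ → (K → ℝ) → ℝ} (hv : IsValueFamily M u C v) (hδ : δ ∈ Set.Ico (0 : ℝ) 1) :
    ConcaveOn ℝ (stdSimplex ℝ K) (v δ) := by
  obtain ⟨hbd, hbell⟩ := hv δ hδ
  refine ⟨convex_stdSimplex ℝ K, fun x hx y hy a b ha hb hab => ?_⟩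
  have hsup : ∀ p ∈ stdSimplex ℝ K, v δ p = sSup (splitPayoffs M u δ (v δ) p) := hbell
  have hbdd := fun {p} (hp : p ∈ stdSimplex ℝ K) => splitPayoffs_bddAbove hM hu hbd hδ hp
  have hz := convex_stdSimplex ℝ K hx hy ha hb hab
  rw [hsup x hx, hsup y hy, hsup _ hz]
  calc a • sSup (splitPayoffs M u δ (v δ) x) + b • sSup (splitPayoffs M u δ (v δ) y)
      = sSup (a • splitPayoffs M u δ (v δ) x + b • splitPayoffs M u δ (v δ) y) := by
        rw [csSup_add (splitPayoffs_nonempty hx).smul_set ((hbdd hx).smul_of_nonneg ha)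
          (splitPayoffs_nonempty hy).smul_set ((hbdd hy).smul_of_nonneg hb),
          Real.sSup_smul_of_nonneg ha, Real.sSup_smul_of_nonneg hb]
    _ ≤ sSup (splitPayoffs M u δ (v δ) (a • x + b • y)) :=
        csSup_le_csSup (hbdd hz)
          ((splitPayoffs_nonempty hx).smul_set.add (splitPayoffs_nonempty hy).smul_set)
          (smul_splitPayoffs_add_smul_subset hM hu hbd hδ ha hb hab)

lemma le_cav {g : (K → ℝ) → ℝ} {B : ℝ} (hB : ∀ p ∈ stdSimplex ℝ K, g p ≤ B) {ξ : K → ℝ} {c : ℝ}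
    (hc : ∀ h, ConcaveOn ℝ (stdSimplex ℝ K) h → (∀ p ∈ stdSimplex ℝ K, g p ≤ h p) → c ≤ h ξ) :
    c ≤ cav g ξ :=
  le_csInf ⟨B, fun _ => B, concaveOn_const B (convex_stdSimplex ℝ K), hB, rfl⟩ <| by
    rintro _ ⟨h, hh, hgh, rfl⟩
    exact hc h hh hgh

lemma IsSplit.splitPayoff_le_stagePayoff_of_eq_cav (hM : IsStochastic M)
    (hu : ∀ p ∈ stdSimplex ℝ K, u p ∈ Set.Icc 0 C) (hw : ∀ p ∈ stdSimplex ℝ K, w p ∈ Set.Icc 0 C)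
    (hw_conc : ConcaveOn ℝ (stdSimplex ℝ K) w) (hδ : δ ∈ Set.Ico (0 : ℝ) 1) {ξ : K → ℝ}
    (hξ : ξ ∈ stdSimplex ℝ K)
    (hcav : u ξ = cav u ξ) {α : ℕ → ℝ} {ξs : ℕ → K → ℝ} (hs : IsSplit ξ α ξs) :
    splitPayoff M u δ w α ξs ≤ stagePayoff M u δ w ξ := by
  have hδ1 : 0 < 1 - δ := sub_pos.2 hδ.2
  have hmajorant : ∀ h, ConcaveOn ℝ (stdSimplex ℝ K) h → (∀ p ∈ stdSimplex ℝ K, u p ≤ h p) →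
      splitPayoff M u δ w α ξs ≤ stagePayoff M h δ w ξ := fun h hh huh =>
    hs.tsum_mul_le_of_concaveOn hξ (concaveOn_stagePayoff hM hh hw_conc hδ)
      (fun p hp => (stagePayoff_mem_Icc hM hu hw hδ hp).1)
      (fun p hp => by unfold stagePayoff; gcongr; exact huh p hp)
  have hle : (splitPayoff M u δ w α ξs - δ * w (Matrix.vecMul ξ M)) / (1 - δ) ≤ u ξ := by
    rw [hcav]
    refine le_cav (fun p hp => (hu p hp).2) fun h hh huh => ?_
    have hbound := hmajorant h hh huh
    unfold stagePayoff at hbound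
    rw [div_le_iff₀ hδ1]
    linarith
  rw [div_le_iff₀ hδ1] at hle
  unfold stagePayoff
  linarith

end Payoff

end

theorem markovian_persuasion_no_information_optimal_at_cav_point_general
    {K : Type*} [Fintype K]
    (M : Matrix K K ℝ) (hM : IsStochastic M)
    (u : (K → ℝ) → ℝ) (hu0 : ∀ ξ ∈ stdSimplex ℝ K, 0 ≤ u ξ)
    (C : ℝ) (hC : IsLUB (u '' stdSimplex ℝ K) C)
    (v : ℝ → (K → ℝ) → ℝ) (hv : IsValueFamily M u C v)
    (ξ : K → ℝ) (hξ : ξ ∈ stdSimplex ℝ K) (hcav : u ξ = cav u ξ) :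
    ∀ δ : ℝ, 0 ≤ δ → δ < 1 →
      v δ ξ = (1 - δ) * u ξ + δ * v δ (Matrix.vecMul ξ M) := by
  intro δ hδ0 hδ1
  have hδ : δ ∈ Set.Ico (0 : ℝ) 1 := ⟨hδ0, hδ1⟩
  have hu : ∀ p ∈ stdSimplex ℝ K, u p ∈ Set.Icc 0 C := fun p hp => ⟨hu0 p hp, hC.1 ⟨p, hp, rfl⟩⟩
  obtain ⟨hbd, hbell⟩ := hv δ hδ
  have hopt : IsGreatest (splitPayoffs M u δ (v δ) ξ) (stagePayoff M u δ (v δ) ξ) := by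
    refine ⟨⟨_, _, isSplit_trivial hξ, by simp [splitPayoff, stagePayoff, tsum_ite_eq]⟩, ?_⟩
    rintro _ ⟨α, ξs, hs, rfl⟩
    exact hs.splitPayoff_le_stagePayoff_of_eq_cav hM hu hbd (hv.concaveOn hM hu hδ) hδ hξ hcav
  exact (hbell ξ hξ).trans hopt.csSup_eq

theorem markovian_persuasion_no_information_optimal_at_cav_point
    {K : Type*} [Fintype K] [Nonempty K]
    (M : Matrix K K ℝ) (hM : IsStochastic M)
    (u : (K → ℝ) → ℝ) (hu0 : ∀ ξ ∈ stdSimplex ℝ K, 0 ≤ u ξ)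
    (husc : UpperSemicontinuousOn u (stdSimplex ℝ K))
    (C : ℝ) (hC : IsLUB (u '' stdSimplex ℝ K) C)
    (v : ℝ → (K → ℝ) → ℝ) (hv : IsValueFamily M u C v)
    (ξ : K → ℝ) (hξ : ξ ∈ stdSimplex ℝ K) (hcav : u ξ = cav u ξ) :
    ∀ δ : ℝ, 0 ≤ δ → δ < 1 →
      v δ ξ = (1 - δ) * u ξ + δ * v δ (Matrix.vecMul ξ M) :=
  markovian_persuasion_no_information_optimal_at_cav_point_general M hM u hu0 C hC v hv ξ hξ hcav
end
end

section
/- Let 0 < μ < λ ≤ 1 and let a : ℕ → ℝ be a bounded sequence (indexed from 1). For each integer m ≥ 0 define F_λ^m(a) := Σ_{n=1}^{∞} λ·(1−λ)^{n−1}·a_{m+n}. Then F_μ^0(a) = (μ/λ)·F_λ^0(a) + (μ/λ)·(λ−μ)·Σ_{m=0}^{∞} (1−μ)^m · F_λ^{m+1}(a). -/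
open scoped BigOperators

noncomputable section

/-- `Fdisc lam a m` is the `(1-lam)`-discounted valuation of the shifted sequence
`(a_{m+1}, a_{m+2}, …)`, where `a n` stands for the stage payoff `a_{n+1}`. -/
def Fdisc (lam : ℝ) (a : ℕ → ℝ) (m : ℕ) : ℝ :=
  ∑' n : ℕ, lam * (1 - lam) ^ n * a (m + n)

/-! Since `lam * a m = F m - (1 - lam) * F (m + 1)` for `F = Fdisc lam a`, the `(1-μ)`-discounted
sum of `a`, multiplied by `lam / μ`, is a discounted sum of such differences; summation by parts
collapses it to `F 0 + (lam - μ) * ∑ (1-μ)^m F (m + 1)`. -/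

theorem summable_pow_mul_of_abs_le {r B : ℝ} (hr : |r| < 1) {f : ℕ → ℝ}
    (hf : ∀ n, |f n| ≤ B) : Summable fun n => r ^ n * f n :=
  ((summable_geometric_of_lt_one (abs_nonneg r) hr).mul_right B).of_norm_bounded fun n => by
    rw [Real.norm_eq_abs, abs_mul, abs_pow]
    exact mul_le_mul_of_nonneg_left (hf n) (pow_nonneg (abs_nonneg r) n)

theorem tsum_pow_mul_sub_shift (s r : ℝ) (F : ℕ → ℝ)
    (hF : Summable fun k => s ^ k * F (k + 1)) :
    ∑' k, s ^ k * (F k - r * F (k + 1)) = F 0 + (s - r) * ∑' k, s ^ k * F (k + 1) := by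
  have hF₀ : Summable fun k => s ^ k * F k := by
    refine (summable_nat_add_iff 1).mp ?_
    simpa only [pow_succ', mul_assoc] using hF.mul_left s
  have hshift : ∑' k, s ^ k * F k = F 0 + s * ∑' k, s ^ k * F (k + 1) := by
    rw [hF₀.tsum_eq_zero_add, ← tsum_mul_left]
    simp only [pow_zero, one_mul, pow_succ', mul_assoc]
  simp only [mul_sub, mul_left_comm _ r]
  rw [hF₀.tsum_sub (hF.mul_left r), tsum_mul_left, hshift]
  ring

theorem abs_Fdisc_le {lam B : ℝ} (hlam₀ : 0 < lam) (hlam₁ : lam ≤ 1) {a : ℕ → ℝ}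
    (ha : ∀ n, |a n| ≤ B) (m : ℕ) : |Fdisc lam a m| ≤ B := by
  have hgeom : HasSum (fun n => lam * B * (1 - lam) ^ n) B := by
    have h := (hasSum_geometric_of_lt_one (sub_nonneg.mpr hlam₁) (by linarith)).mul_left (lam * B)
    rwa [sub_sub_cancel, mul_comm lam B, mul_inv_cancel_right₀ hlam₀.ne', mul_comm B] at h
  rw [← Real.norm_eq_abs, Fdisc]
  refine tsum_of_norm_bounded hgeom fun n => ?_
  have hpow : 0 ≤ (1 - lam) ^ n := pow_nonneg (sub_nonneg.mpr hlam₁) n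
  rw [Real.norm_eq_abs, abs_mul, abs_mul, abs_of_pos hlam₀, abs_of_nonneg hpow, mul_right_comm]
  exact mul_le_mul_of_nonneg_right (mul_le_mul_of_nonneg_left (ha (m + n)) hlam₀.le) hpow

theorem Fdisc_eq_add {lam : ℝ} {a : ℕ → ℝ} {m : ℕ}
    (h : Summable fun n => lam * (1 - lam) ^ n * a (m + n)) :
    Fdisc lam a m = lam * a m + (1 - lam) * Fdisc lam a (m + 1) := by
  rw [Fdisc, h.tsum_eq_zero_add, Fdisc, ← tsum_mul_left]
  simp only [pow_zero, mul_one, add_zero, pow_succ, ← add_assoc, add_right_comm m _ 1]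
  congr 1
  exact tsum_congr fun n => by ring

/-- Sorin's algebraic identity decomposing a `(1-μ)`-discounted valuation as a
convex combination of `(1-λ)`-discounted valuations of shifted sequences. -/
theorem sorin_discount_decomposition
    (μ lam : ℝ) (hμ : 0 < μ) (hμlam : μ < lam) (hlam : lam ≤ 1)
    (a : ℕ → ℝ) (B : ℝ) (hB : ∀ n, |a n| ≤ B) :
    Fdisc μ a 0 =
      (μ / lam) * Fdisc lam a 0 +
        (μ / lam) * (lam - μ) * ∑' m : ℕ, (1 - μ) ^ m * Fdisc lam a (m + 1) := by
  have hlam₀ : 0 < lam := hμ.trans hμlam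
  have hrec : ∀ k, lam * a k = Fdisc lam a k - (1 - lam) * Fdisc lam a (k + 1) := fun k => by
    have hterms := (summable_pow_mul_of_abs_le (r := 1 - lam)
      (abs_lt.mpr ⟨by linarith, by linarith⟩) fun n => hB (k + n)).mul_left lam
    rw [Fdisc_eq_add (by simpa only [mul_assoc] using hterms)]
    ring
  have hsummable : Summable fun k => (1 - μ) ^ k * Fdisc lam a (k + 1) :=
    summable_pow_mul_of_abs_le (abs_lt.mpr ⟨by linarith, by linarith⟩)
      fun k => abs_Fdisc_le hlam₀ hlam hB (k + 1)
  calc Fdisc μ a 0 = μ / lam * ∑' k, (1 - μ) ^ k * (lam * a k) := by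
        rw [Fdisc, ← tsum_mul_left]
        exact tsum_congr fun k => by rw [zero_add]; field_simp
    _ = μ / lam * (Fdisc lam a 0 +
          ((1 - μ) - (1 - lam)) * ∑' k, (1 - μ) ^ k * Fdisc lam a (k + 1)) := by
        simp only [hrec, tsum_pow_mul_sub_shift _ _ _ hsummable]
    _ = _ := by ring
end
end
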